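/- arXiv:2008.05529 — 14 statements merged into one kernel-verified Lean document; each statement's English description precedes it below -/
import Mathlib

section
/- Let R be a G-graded commutative ring, M a graded R-module, N a graded R-submodule, and s a nonzero homogeneous element of R. Then N is a graded s-prime submodule of M if and only if for every graded ideal I of R and every graded submodule K of M with IK ⊆ N, either sI ⊆ (N :_R M) or sK ⊆ N. -/
open DirectSum

variable {G R M : Type*}

/-- A submodule is graded if it contains all homogeneous components of its elements. -/
def IsGradedSubmodule [CommRing R] [AddCommGroup M] [Module R M] [DecidableEq G]
    (ℳ : G → AddSubgroup M) [DirectSum.Decomposition ℳ] (N : Submodule R M) : Prop :=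
  ∀ m ∈ N, ∀ g : G, (DirectSum.decompose ℳ m g : M) ∈ N

/-- A graded ideal of a graded ring. -/
def IsGradedIdeal [CommRing R] [DecidableEq G]
    (𝒜 : G → AddSubgroup R) [DirectSum.Decomposition 𝒜] (P : Ideal R) : Prop :=
  ∀ r ∈ P, ∀ g : G, (DirectSum.decompose 𝒜 r g : R) ∈ P

/-- `N` is a graded `s`-prime submodule: `s ∉ (N :_R M)` and for homogeneous `r`, `m`,
`r • m ∈ N` implies `s * r ∈ (N :_R M)` or `s • m ∈ N`. -/
def IsGradedSPrime [CommRing R] [AddCommGroup M] [Module R M]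
    (𝒜 : G → AddSubgroup R) (ℳ : G → AddSubgroup M) (s : R) (N : Submodule R M) : Prop :=
  s ∉ N.colon ⊤ ∧
  ∀ (r : R) (m : M), SetLike.IsHomogeneousElem 𝒜 r → SetLike.IsHomogeneousElem ℳ m →
    r • m ∈ N → s * r ∈ N.colon ⊤ ∨ s • m ∈ N

/-- `P` is a graded `s`-prime ideal. -/
def IsGradedSPrimeIdeal [CommRing R]
    (𝒜 : G → AddSubgroup R) (s : R) (P : Ideal R) : Prop :=
  s ∉ P ∧
  ∀ a b : R, SetLike.IsHomogeneousElem 𝒜 a → SetLike.IsHomogeneousElem 𝒜 b →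
    a * b ∈ P → s * a ∈ P ∨ s * b ∈ P

/-- `K` is a graded prime submodule. -/
def IsGradedPrime [CommRing R] [AddCommGroup M] [Module R M]
    (𝒜 : G → AddSubgroup R) (ℳ : G → AddSubgroup M) (K : Submodule R M) : Prop :=
  K ≠ ⊤ ∧
  ∀ (r : R) (m : M), SetLike.IsHomogeneousElem 𝒜 r → SetLike.IsHomogeneousElem ℳ m →
    r • m ∈ K → r ∈ K.colon ⊤ ∨ m ∈ K

/-! The forward direction reduces to homogeneous components: if `s a ∉ (N : M)` for some
`a ∈ I`, then already `s a_g ∉ (N : M)` for a component `a_g ∈ I`, and `s`-primality applied to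
`a_g • k_h ∈ N` puts `s k_h` in `N` for every component of every `k ∈ K`. The converse applies
the hypothesis to the graded ideal `R r` and the graded submodule `R m`. -/

theorem DirectSum.mem_of_forall_decompose_mem {ι σ P : Type*} [DecidableEq ι] [AddCommMonoid M]
    [SetLike σ M] [AddSubmonoidClass σ M] (ℳ : ι → σ) [Decomposition ℳ]
    [SetLike P M] [AddSubmonoidClass P M] {p : P} {x : M}
    (h : ∀ i, (decompose ℳ x i : M) ∈ p) : x ∈ p := by
  classical
  rw [← sum_support_decompose ℳ x]
  exact sum_mem fun i _ ↦ h i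

theorem Submodule.isHomogeneous_span_singleton {ι σA σM : Type*} [Semiring R] [AddCommMonoid M]
    [Module R M] [AddMonoid ι] [DecidableEq ι] [SetLike σA R] [AddSubmonoidClass σA R]
    [SetLike σM M] [AddSubmonoidClass σM M] (𝒜 : ι → σA) (ℳ : ι → σM) [GradedRing 𝒜]
    [Decomposition ℳ] [SetLike.GradedSMul 𝒜 ℳ] {m : M} (hm : SetLike.IsHomogeneousElem ℳ m) :
    (span R {m}).IsHomogeneous ℳ := by
  obtain ⟨j, hmj⟩ := hm
  intro g x hx
  obtain ⟨t, rfl⟩ := mem_span_singleton.1 hx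
  clear hx
  induction t using Decomposition.inductionOn 𝒜 with
  | zero => simp
  | @homogeneous i a =>
    have hsm : (a : R) • m ∈ ℳ (i + j) := SetLike.GradedSMul.smul_mem a.2 hmj
    by_cases hg : i + j = g
    · subst hg
      rw [decompose_of_mem_same ℳ hsm]
      exact smul_mem _ _ (mem_span_singleton_self m)
    · rw [decompose_of_mem_ne ℳ hsm hg]
      exact zero_mem _
  | add t₁ t₂ h₁ h₂ =>
    rw [add_smul, decompose_add]
    exact add_mem h₁ h₂

section

variable [CommRing R] [AddCommGroup M] [Module R M] [DecidableEq G]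
  {𝒜 : G → AddSubgroup R} {ℳ : G → AddSubgroup M}

theorem isGradedSubmodule_iff [Decomposition ℳ] {N : Submodule R M} :
    IsGradedSubmodule ℳ N ↔ N.IsHomogeneous ℳ :=
  ⟨fun h _ m hm ↦ h m hm _, fun h _ hm _ ↦ h _ hm⟩

theorem isGradedIdeal_iff [AddMonoid G] [GradedRing 𝒜] {I : Ideal R} :
    IsGradedIdeal 𝒜 I ↔ I.IsHomogeneous 𝒜 :=
  ⟨fun h _ r hr ↦ h r hr _, fun h _ hr _ ↦ h _ hr⟩

theorem IsGradedSPrime.forall_mul_mem_colon_or_forall_smul_mem [Decomposition 𝒜]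
    [Decomposition ℳ] {s : R} {N : Submodule R M} (hN : IsGradedSPrime 𝒜 ℳ s N)
    {I : Ideal R} {K : Submodule R M} (hI : IsGradedIdeal 𝒜 I) (hK : IsGradedSubmodule ℳ K)
    (hIK : I • K ≤ N) : (∀ a ∈ I, s * a ∈ N.colon ⊤) ∨ ∀ k ∈ K, s • k ∈ N := by
  refine or_iff_not_imp_left.2 fun hsI k hk ↦ ?_
  push Not at hsI
  obtain ⟨a, haI, hsa⟩ := hsI
  have ha : a ∉ Submodule.comap (LinearMap.mulLeft R s) (N.colon ⊤) := hsa
  obtain ⟨g, hg⟩ := not_forall.1 (mt (mem_of_forall_decompose_mem 𝒜) ha)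
  have hsk : k ∈ N.comap (s • LinearMap.id) := mem_of_forall_decompose_mem ℳ fun h ↦
    (hN.2 _ _ ⟨g, SetLike.coe_mem _⟩ ⟨h, SetLike.coe_mem _⟩
      (hIK (Submodule.smul_mem_smul (hI a haI g) (hK k hk h)))).resolve_left hg
  simpa using hsk

theorem isGradedSPrime_of_forall_mul_mem_colon_or_forall_smul_mem [AddMonoid G] [GradedRing 𝒜]
    [Decomposition ℳ] [SetLike.GradedSMul 𝒜 ℳ] {s : R} {N : Submodule R M}
    (hsN : s ∉ N.colon ⊤)
    (H : ∀ (I : Ideal R) (K : Submodule R M), IsGradedIdeal 𝒜 I → IsGradedSubmodule ℳ K →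
      I • K ≤ N → (∀ a ∈ I, s * a ∈ N.colon ⊤) ∨ (∀ k ∈ K, s • k ∈ N)) :
    IsGradedSPrime 𝒜 ℳ s N := by
  refine ⟨hsN, fun r m hr hm hrm ↦ ?_⟩
  have hI : IsGradedIdeal 𝒜 (Ideal.span {r}) :=
    isGradedIdeal_iff.2 (Ideal.homogeneous_span 𝒜 {r} (by simpa))
  have hK : IsGradedSubmodule ℳ (Submodule.span R {m}) :=
    isGradedSubmodule_iff.2 (Submodule.isHomogeneous_span_singleton 𝒜 ℳ hm)
  have hIK : Ideal.span {r} • Submodule.span R {m} ≤ N := by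
    rwa [Submodule.span_smul_span, Set.singleton_smul_singleton, Submodule.span_le,
      Set.singleton_subset_iff]
  exact (H _ _ hI hK hIK).imp (· r (Ideal.mem_span_singleton_self r))
    (· m (Submodule.mem_span_singleton_self m))

end

theorem stmt_0_general [AddGroup G] [DecidableEq G] [CommRing R] [AddCommGroup M] [Module R M]
    (𝒜 : G → AddSubgroup R) (ℳ : G → AddSubgroup M)
    [GradedRing 𝒜] [DirectSum.Decomposition ℳ] [SetLike.GradedSMul 𝒜 ℳ]
    (N : Submodule R M)
    (s : R) (hsN : s ∉ N.colon ⊤) :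
    IsGradedSPrime 𝒜 ℳ s N ↔
      ∀ (I : Ideal R) (K : Submodule R M), IsGradedIdeal 𝒜 I → IsGradedSubmodule ℳ K →
        I • K ≤ N → (∀ a ∈ I, s * a ∈ N.colon ⊤) ∨ (∀ k ∈ K, s • k ∈ N) :=
  ⟨fun h _ _ hI hK hIK ↦ h.forall_mul_mem_colon_or_forall_smul_mem hI hK hIK,
    isGradedSPrime_of_forall_mul_mem_colon_or_forall_smul_mem hsN⟩

/-- `N` is graded `s`-prime iff for every graded ideal `I` and graded
submodule `K` with `I • K ⊆ N`, `sI ⊆ (N :_R M)` or `sK ⊆ N`. -/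
theorem stmt_0 [AddGroup G] [DecidableEq G] [CommRing R] [AddCommGroup M] [Module R M]
    (𝒜 : G → AddSubgroup R) (ℳ : G → AddSubgroup M)
    [GradedRing 𝒜] [DirectSum.Decomposition ℳ] [SetLike.GradedSMul 𝒜 ℳ]
    (N : Submodule R M) (hN : IsGradedSubmodule ℳ N)
    (s : R) (hs0 : s ≠ 0) (hsh : SetLike.IsHomogeneousElem 𝒜 s) (hsN : s ∉ N.colon ⊤) :
    IsGradedSPrime 𝒜 ℳ s N ↔
      ∀ (I : Ideal R) (K : Submodule R M), IsGradedIdeal 𝒜 I → IsGradedSubmodule ℳ K →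
        I • K ≤ N → (∀ a ∈ I, s * a ∈ N.colon ⊤) ∨ (∀ k ∈ K, s • k ∈ N) :=
  stmt_0_general 𝒜 ℳ N s hsN
end

section
/- Let R be a G-graded commutative ring, P a graded ideal of R, and s a nonzero homogeneous element. Then P is a graded s-prime ideal if and only if for all graded ideals I, J of R with IJ ⊆ P, one has sI ⊆ P or sJ ⊆ P. -/
open DirectSum

variable {G R M : Type*}

section GradedIdeals

variable [DecidableEq G] [CommRing R] (𝒜 : G → AddSubgroup R)

theorem isGradedIdeal_iff_isHomogeneous [AddMonoid G] [GradedRing 𝒜] (I : Ideal R) :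
    IsGradedIdeal 𝒜 I ↔ I.IsHomogeneous 𝒜 :=
  ⟨fun h g r hr => h r hr g, fun h _ hr g => h g hr⟩

theorem isGradedIdeal_span_singleton [AddMonoid G] [GradedRing 𝒜] {a : R}
    (ha : SetLike.IsHomogeneousElem 𝒜 a) : IsGradedIdeal 𝒜 (Ideal.span {a}) :=
  (isGradedIdeal_iff_isHomogeneous 𝒜 _).mpr <|
    Ideal.homogeneous_span 𝒜 {a} fun _ hx => (Set.mem_singleton_iff.mp hx) ▸ ha

variable {𝒜}

theorem exists_mul_decompose_notMem [DirectSum.Decomposition 𝒜] {P : Ideal R} {r a : R}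
    (h : r * a ∉ P) : ∃ g, r * (decompose 𝒜 a g : R) ∉ P := by
  classical
  contrapose! h
  rw [← sum_support_decompose 𝒜 a, Finset.mul_sum]
  exact P.sum_mem fun g _ => h g

theorem IsGradedSPrimeIdeal.forall_mul_mem_or_of_mul_le [DirectSum.Decomposition 𝒜]
    {s : R} {P : Ideal R} (hP : IsGradedSPrimeIdeal 𝒜 s P) {I J : Ideal R}
    (hI : IsGradedIdeal 𝒜 I) (hJ : IsGradedIdeal 𝒜 J) (hIJ : I * J ≤ P) :
    (∀ a ∈ I, s * a ∈ P) ∨ (∀ b ∈ J, s * b ∈ P) := by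
  by_contra! ⟨⟨a, haI, haP⟩, ⟨b, hbJ, hbP⟩⟩
  -- Replace the witnesses `a ∈ I`, `b ∈ J` by homogeneous components, which stay in `I`, `J`.
  obtain ⟨g, hg⟩ := exists_mul_decompose_notMem (𝒜 := 𝒜) haP
  obtain ⟨g', hg'⟩ := exists_mul_decompose_notMem (𝒜 := 𝒜) hbP
  have hmem : (decompose 𝒜 a g : R) * (decompose 𝒜 b g' : R) ∈ P :=
    hIJ (Ideal.mul_mem_mul (hI a haI g) (hJ b hbJ g'))
  exact (hP.2 _ _ ⟨g, SetLike.coe_mem _⟩ ⟨g', SetLike.coe_mem _⟩ hmem).elim hg hg'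

theorem isGradedSPrimeIdeal_of_forall_mul_le [AddMonoid G] [GradedRing 𝒜]
    {s : R} {P : Ideal R} (hsP : s ∉ P)
    (h : ∀ I J : Ideal R, IsGradedIdeal 𝒜 I → IsGradedIdeal 𝒜 J →
      I * J ≤ P → (∀ a ∈ I, s * a ∈ P) ∨ (∀ b ∈ J, s * b ∈ P)) :
    IsGradedSPrimeIdeal 𝒜 s P := by
  refine ⟨hsP, fun a b ha hb hab => ?_⟩
  have hle : Ideal.span {a} * Ideal.span {b} ≤ P := by
    rwa [Ideal.span_singleton_mul_span_singleton, Ideal.span_singleton_le_iff_mem]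
  obtain hsa | hsb :=
    h _ _ (isGradedIdeal_span_singleton 𝒜 ha) (isGradedIdeal_span_singleton 𝒜 hb) hle
  exacts [.inl (hsa a (Ideal.mem_span_singleton_self a)),
    .inr (hsb b (Ideal.mem_span_singleton_self b))]

end GradedIdeals

theorem stmt_1_general [AddGroup G] [DecidableEq G] [CommRing R]
    (𝒜 : G → AddSubgroup R) [GradedRing 𝒜]
    (P : Ideal R)
    (s : R) (hsP : s ∉ P) :
    IsGradedSPrimeIdeal 𝒜 s P ↔
      ∀ I J : Ideal R, IsGradedIdeal 𝒜 I → IsGradedIdeal 𝒜 J →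
        I * J ≤ P → (∀ a ∈ I, s * a ∈ P) ∨ (∀ b ∈ J, s * b ∈ P) :=
  ⟨fun hP _ _ hI hJ hIJ => hP.forall_mul_mem_or_of_mul_le hI hJ hIJ,
    isGradedSPrimeIdeal_of_forall_mul_le hsP⟩

/-- a graded ideal `P` is graded `s`-prime iff for all graded ideals `I`, `J`
with `IJ ⊆ P`, one has `sI ⊆ P` or `sJ ⊆ P`. -/
theorem stmt_1 [AddGroup G] [DecidableEq G] [CommRing R]
    (𝒜 : G → AddSubgroup R) [GradedRing 𝒜]
    (P : Ideal R) (hP : IsGradedIdeal 𝒜 P)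
    (s : R) (hs0 : s ≠ 0) (hsh : SetLike.IsHomogeneousElem 𝒜 s) (hsP : s ∉ P) :
    IsGradedSPrimeIdeal 𝒜 s P ↔
      ∀ I J : Ideal R, IsGradedIdeal 𝒜 I → IsGradedIdeal 𝒜 J →
        I * J ≤ P → (∀ a ∈ I, s * a ∈ P) ∨ (∀ b ∈ J, s * b ∈ P) :=
  stmt_1_general 𝒜 P s hsP
end

section
/- Let M be a graded R-module, N a graded submodule, and s a nonzero homogeneous element of R. If N is a graded s-prime submodule of M, then (N :_R M) is a graded s-prime ideal of R. -/
open DirectSum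

variable {G R M : Type*}

theorem Submodule.mem_colon_top_of_forall_isHomogeneousElem [DecidableEq G] [CommRing R]
    [AddCommGroup M] [Module R M] (ℳ : G → AddSubgroup M) [DirectSum.Decomposition ℳ]
    {N : Submodule R M} {r : R} (h : ∀ m, SetLike.IsHomogeneousElem ℳ m → r • m ∈ N) :
    r ∈ N.colon ⊤ := by
  classical
  refine Submodule.mem_colon.mpr fun m _ => ?_
  rw [← DirectSum.sum_support_decompose ℳ m, Finset.smul_sum]
  exact Submodule.sum_mem _ fun g _ => h _ ⟨g, (decompose ℳ m g).2⟩

theorem stmt_2_general [AddGroup G] [DecidableEq G] [CommRing R] [AddCommGroup M] [Module R M]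
    (𝒜 : G → AddSubgroup R) (ℳ : G → AddSubgroup M)
    [DirectSum.Decomposition ℳ] [SetLike.GradedSMul 𝒜 ℳ]
    (N : Submodule R M) (s : R) (h : IsGradedSPrime 𝒜 ℳ s N) :
    IsGradedSPrimeIdeal 𝒜 s (N.colon ⊤) := by
  refine ⟨h.1, fun a b ha hb hab => or_iff_not_imp_left.mpr fun hsa => ?_⟩
  refine Submodule.mem_colon_top_of_forall_isHomogeneousElem ℳ fun m hm => ?_
  have habm : a • b • m ∈ N := by
    rw [smul_smul]
    exact Submodule.mem_colon.mp hab m trivial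
  rw [mul_smul]
  exact (h.2 a (b • m) ha (hb.graded_smul hm) habm).resolve_left hsa

/-- if `N` is a graded `s`-prime submodule, then `(N :_R M)` is a graded
`s`-prime ideal. -/
theorem stmt_2 [AddGroup G] [DecidableEq G] [CommRing R] [AddCommGroup M] [Module R M]
    (𝒜 : G → AddSubgroup R) (ℳ : G → AddSubgroup M)
    [GradedRing 𝒜] [DirectSum.Decomposition ℳ] [SetLike.GradedSMul 𝒜 ℳ]
    (N : Submodule R M) (hN : IsGradedSubmodule ℳ N)
    (s : R) (hs0 : s ≠ 0) (hsh : SetLike.IsHomogeneousElem 𝒜 s)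
    (h : IsGradedSPrime 𝒜 ℳ s N) :
    IsGradedSPrimeIdeal 𝒜 s (N.colon ⊤) :=
  stmt_2_general 𝒜 ℳ N s h
end

section
/- Let M be a graded multiplication R-module, N a graded submodule of M, and s a nonzero homogeneous element of R. If (N :_R M) is a graded s-prime ideal of R, then N is a graded s-prime submodule of M. -/
open DirectSum

variable {G R M : Type*}

/-! For homogeneous `r`, `m` with `r • m ∈ N`, put `J = (Rm :_R M)`. As `M` is a multiplication
module, `Rm = J M`, hence `r J ⊆ (N :_R M)`. The ideal `J` is graded, so testing the `s`-prime
property of `(N :_R M)` on the homogeneous elements of `J` gives `s r ∈ (N :_R M)` or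
`s J ⊆ (N :_R M)`, and in the latter case `s m ∈ s J M ⊆ N`. -/

section GradedModule

variable [DecidableEq G] [CommRing R] [AddCommGroup M] [Module R M]
    (𝒜 : G → AddSubgroup R) {ℳ : G → AddSubgroup M}

theorem coe_decompose_smul_add_of_right_mem [AddRightCancelMonoid G] [GradedRing 𝒜]
    [DirectSum.Decomposition ℳ] [SetLike.GradedSMul 𝒜 ℳ] (a : R) {i j : G} {x : M}
    (hx : x ∈ ℳ j) :
    (decompose ℳ (a • x) (i + j) : M) = (decompose 𝒜 a i : R) • x := by
  induction a using DirectSum.Decomposition.inductionOn 𝒜 with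
  | zero => simp
  | @homogeneous k a =>
    have hax : (a : R) • x ∈ ℳ (k + j) := SetLike.GradedSMul.smul_mem a.2 hx
    by_cases hki : k = i
    · subst hki
      rw [decompose_of_mem_same ℳ hax, decompose_of_mem_same 𝒜 a.2]
    · rw [decompose_of_mem_ne ℳ hax (mt add_right_cancel hki), decompose_of_mem_ne 𝒜 a.2 hki,
        zero_smul]
  | add a b ha hb =>
    rw [add_smul, decompose_add, DirectSum.add_apply, AddSubgroup.coe_add, ha, hb, decompose_add, DirectSum.add_apply,
      AddSubgroup.coe_add, add_smul]

theorem IsGradedSubmodule.isGradedIdeal_colon [AddRightCancelMonoid G] [GradedRing 𝒜]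
    [DirectSum.Decomposition ℳ] [SetLike.GradedSMul 𝒜 ℳ] {K L : Submodule R M}
    (hK : IsGradedSubmodule ℳ K) (hL : IsGradedSubmodule ℳ L) :
    IsGradedIdeal 𝒜 (K.colon L) := by
  classical
  intro a ha i
  refine Submodule.mem_colon.mpr fun x hx => ?_
  rw [← sum_support_decompose ℳ x, Finset.smul_sum]
  refine Submodule.sum_mem _ fun j _ => ?_
  rw [← coe_decompose_smul_add_of_right_mem 𝒜 a (decompose ℳ x j).2]
  exact hK _ (Submodule.mem_colon.mp ha _ (hL x hx j)) _

theorem isGradedSubmodule_span_singleton [AddGroup G] [GradedRing 𝒜]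
    [DirectSum.Decomposition ℳ] [SetLike.GradedSMul 𝒜 ℳ] {m : M}
    (hm : SetLike.IsHomogeneousElem ℳ m) :
    IsGradedSubmodule ℳ (Submodule.span R {m}) := by
  obtain ⟨j, hj⟩ := hm
  intro y hy i
  obtain ⟨a, rfl⟩ := Submodule.mem_span_singleton.mp hy
  rw [← sub_add_cancel i j, coe_decompose_smul_add_of_right_mem 𝒜 a hj]
  exact Submodule.smul_mem _ _ (Submodule.mem_span_singleton_self m)

end GradedModule

theorem isGradedSubmodule_top [DecidableEq G] [CommRing R] [AddCommGroup M] [Module R M]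
    (ℳ : G → AddSubgroup M) [DirectSum.Decomposition ℳ] :
    IsGradedSubmodule (R := R) ℳ ⊤ :=
  fun _ _ _ => trivial

theorem Submodule.mul_mem_colon_of_mem_colon [Semiring R] [AddCommMonoid M] [Module R M]
    {N K : Submodule R M} {S : Set M} {r b : R} (hr : r ∈ N.colon K) (hb : b ∈ K.colon S) :
    r * b ∈ N.colon S :=
  mem_colon.mpr fun x hx => mul_smul r b x ▸ mem_colon.mp hr _ (mem_colon.mp hb x hx)

theorem Submodule.smul_mem_of_mem_smul_top [CommRing R] [AddCommGroup M] [Module R M]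
    {J : Ideal R} {N : Submodule R M} {s : R} {x : M} (hx : x ∈ J • (⊤ : Submodule R M))
    (hsJ : ∀ a ∈ J, s * a ∈ N.colon ⊤) : s • x ∈ N := by
  have hle : J • (⊤ : Submodule R M) ≤ N.comap (s • LinearMap.id) :=
    smul_le.mpr fun a ha y _ => by
      rw [mem_comap, LinearMap.smul_apply, LinearMap.id_apply, smul_smul]
      exact mem_colon.mp (hsJ a ha) y trivial
  exact hle hx

theorem IsGradedSPrimeIdeal.mul_mem_or_forall_mul_mem [DecidableEq G] [CommRing R]
    {𝒜 : G → AddSubgroup R} [DirectSum.Decomposition 𝒜] {s r : R} {P J : Ideal R}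
    (hP : IsGradedSPrimeIdeal 𝒜 s P) (hJ : IsGradedIdeal 𝒜 J)
    (hr : SetLike.IsHomogeneousElem 𝒜 r) (hrJ : ∀ b ∈ J, r * b ∈ P) :
    s * r ∈ P ∨ ∀ b ∈ J, s * b ∈ P := by
  classical
  by_cases hbad : ∃ b ∈ J, SetLike.IsHomogeneousElem 𝒜 b ∧ s * b ∉ P
  · obtain ⟨b, hbJ, hb, hsb⟩ := hbad
    exact Or.inl ((hP.2 r b hr hb (hrJ b hbJ)).resolve_right hsb)
  · push Not at hbad
    refine Or.inr fun b hbJ => ?_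
    rw [← sum_support_decompose 𝒜 b, Finset.mul_sum]
    exact Ideal.sum_mem _ fun i _ => hbad _ (hJ b hbJ i) ⟨i, (decompose 𝒜 b i).2⟩

theorem stmt_3_general [AddGroup G] [DecidableEq G] [CommRing R] [AddCommGroup M] [Module R M]
    (𝒜 : G → AddSubgroup R) (ℳ : G → AddSubgroup M)
    [GradedRing 𝒜] [DirectSum.Decomposition ℳ] [SetLike.GradedSMul 𝒜 ℳ]
    (hmult : ∀ K : Submodule R M, IsGradedSubmodule ℳ K → K = K.colon ⊤ • (⊤ : Submodule R M))
    (N : Submodule R M)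
    (s : R)
    (h : IsGradedSPrimeIdeal 𝒜 s (N.colon ⊤)) :
    IsGradedSPrime 𝒜 ℳ s N := by
  refine ⟨h.1, fun r m hr hm hrm => ?_⟩
  have hspan := isGradedSubmodule_span_singleton 𝒜 hm
  have hrJ : ∀ b ∈ (Submodule.span R {m}).colon ⊤, r * b ∈ N.colon ⊤ := fun b hb =>
    Submodule.mul_mem_colon_of_mem_colon (Submodule.mem_colon_span_singleton.mpr hrm) hb
  rcases h.mul_mem_or_forall_mul_mem (hspan.isGradedIdeal_colon 𝒜 (isGradedSubmodule_top ℳ))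
    hr hrJ with hsr | hsJ
  · exact Or.inl hsr
  · have hmJ := hmult _ hspan ▸ Submodule.mem_span_singleton_self m
    exact Or.inr (Submodule.smul_mem_of_mem_smul_top hmJ hsJ)

/-- in a graded multiplication module, if `(N :_R M)` is a graded `s`-prime
ideal, then `N` is a graded `s`-prime submodule. -/
theorem stmt_3 [AddGroup G] [DecidableEq G] [CommRing R] [AddCommGroup M] [Module R M]
    (𝒜 : G → AddSubgroup R) (ℳ : G → AddSubgroup M)
    [GradedRing 𝒜] [DirectSum.Decomposition ℳ] [SetLike.GradedSMul 𝒜 ℳ]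
    (hmult : ∀ K : Submodule R M, IsGradedSubmodule ℳ K → K = K.colon ⊤ • (⊤ : Submodule R M))
    (N : Submodule R M) (hN : IsGradedSubmodule ℳ N)
    (s : R) (hs0 : s ≠ 0) (hsh : SetLike.IsHomogeneousElem 𝒜 s)
    (h : IsGradedSPrimeIdeal 𝒜 s (N.colon ⊤)) :
    IsGradedSPrime 𝒜 ℳ s N :=
  stmt_3_general 𝒜 ℳ hmult N s h
end

section
/- Let M be a finitely generated graded R-module and s a nonzero homogeneous element such that every proper graded submodule of M is graded s-prime. If t is a homogeneous element of R that is not a homogeneous zero divisor of M, then tM = M. -/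
open DirectSum

variable {G R M : Type*}

/-! If `tM ≠ M`, then `tM` and `t²M` are proper graded submodules, hence graded `s`-prime.
For homogeneous `c`, `t • (t • c) ∈ t²M`, so `s`-primeness of `t²M` gives `s • t • c ∈ t²M`, and
cancelling the non-zero-divisor `t` gives `s • c ∈ tM`. Since homogeneous elements span `M`, this
puts `s` in `(tM :_R M)`, contradicting the `s`-primeness of `tM`. -/

open Pointwise

theorem IsSMulRegular.mem_of_smul_mem_pointwise_smul {R M : Type*} [CommSemiring R]
    [AddCommMonoid M] [Module R M] {t : R} (ht : IsSMulRegular M t) {N : Submodule R M} {x : M}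
    (hx : t • x ∈ t • N) : x ∈ N := by
  obtain ⟨y, hy, hyx⟩ := (Submodule.mem_smul_pointwise_iff_exists _ _ _).1 hx
  exact ht hyx ▸ hy

section Graded

variable [DecidableEq G] [CommRing R] [AddCommGroup M] [Module R M]
  {ℳ : G → AddSubgroup M} [DirectSum.Decomposition ℳ]

theorem Submodule.eq_top_of_forall_homogeneous_mem (N : Submodule R M)
    (hN : ∀ m : M, SetLike.IsHomogeneousElem ℳ m → m ∈ N) : N = ⊤ := by
  have hmem : ∀ m : M, m ∈ N := by
    intro m
    induction m using DirectSum.Decomposition.inductionOn ℳ with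
    | zero => exact N.zero_mem
    | @homogeneous i m => exact hN m ⟨i, m.2⟩
    | add x y hx hy => exact N.add_mem hx hy
  exact eq_top_iff.2 fun m _ => hmem m

theorem Submodule.mem_colon_top_of_forall_homogeneous {N : Submodule R M} {s : R}
    (hs : ∀ m : M, SetLike.IsHomogeneousElem ℳ m → s • m ∈ N) : s ∈ N.colon ⊤ :=
  Submodule.mem_colon.2 fun c _ => by
    have hcomap := (N.comap (s • LinearMap.id)).eq_top_of_forall_homogeneous_mem hs
    exact Submodule.eq_top_iff'.1 hcomap c

variable [AddGroup G] {𝒜 : G → AddSubgroup R} [SetLike.GradedSMul 𝒜 ℳ]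

theorem decompose_smul_of_mem {t : R} {g : G} (ht : t ∈ 𝒜 g) (y : M) (j : G) :
    (decompose ℳ (t • y) (g + j) : M) = t • (decompose ℳ y j : M) := by
  induction y using DirectSum.Decomposition.inductionOn ℳ with
  | zero => simp
  | @homogeneous i m =>
    have htm : t • (m : M) ∈ ℳ (g + i) := SetLike.GradedSMul.smul_mem ht m.2
    by_cases hij : i = j
    · subst hij
      rw [decompose_of_mem_same ℳ m.2, decompose_of_mem_same ℳ htm]
    · rw [decompose_of_mem_ne ℳ m.2 hij, decompose_of_mem_ne ℳ htm (by simpa using hij),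
        smul_zero]
  | add x y hx hy =>
    simp only [smul_add, decompose_add, DirectSum.add_apply, AddMemClass.coe_add, hx, hy]

theorem isSMulRegular_of_forall_homogeneous {t : R} {g : G} (ht : t ∈ 𝒜 g)
    (htz : ∀ m : M, SetLike.IsHomogeneousElem ℳ m → t • m = 0 → m = 0) :
    IsSMulRegular M t := by
  refine (isSMulRegular_iff_right_eq_zero_of_smul (M := M)).2 fun m hm => ?_
  classical
  rw [← sum_support_decompose ℳ m]
  refine Finset.sum_eq_zero fun j _ => htz _ ⟨j, (decompose ℳ m j).2⟩ ?_
  rw [← decompose_smul_of_mem ht, hm, decompose_zero, DirectSum.zero_apply, ZeroMemClass.coe_zero]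

theorem IsGradedSubmodule.pointwise_smul {N : Submodule R M} (hN : IsGradedSubmodule ℳ N)
    {t : R} {g : G} (ht : t ∈ 𝒜 g) : IsGradedSubmodule ℳ (t • N) := by
  rintro _ ⟨y, hy, rfl⟩ j
  have hcomp := decompose_smul_of_mem (ℳ := ℳ) ht y (-g + j)
  rw [add_neg_cancel_left] at hcomp
  exact hcomp ▸ Submodule.smul_mem_pointwise_smul _ t N (hN y hy _)

end Graded

theorem IsGradedSPrime.smul_mem_of_pointwise_smul [Add G] [CommRing R] [AddCommGroup M]
    [Module R M] {𝒜 : G → AddSubgroup R} {ℳ : G → AddSubgroup M} [SetLike.GradedSMul 𝒜 ℳ]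
    {s t : R} {g : G} (ht : t ∈ 𝒜 g) (hreg : IsSMulRegular M t) {N : Submodule R M}
    (hN : IsGradedSPrime 𝒜 ℳ s (t • N)) {c : M} (hc : SetLike.IsHomogeneousElem ℳ c)
    (htc : t • c ∈ N) : s • c ∈ N := by
  have hstc : s • t • c ∈ t • N := by
    rcases hN.2 t (t • c) ⟨g, ht⟩ (SetLike.IsHomogeneousElem.graded_smul ⟨g, ht⟩ hc)
      (Submodule.smul_mem_pointwise_smul _ t N htc) with hst | hsc
    · exact mul_smul s t c ▸ Submodule.mem_colon.1 hst c trivial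
    · exact hsc
  exact hreg.mem_of_smul_mem_pointwise_smul (smul_comm s t c ▸ hstc)

theorem stmt_6_general [AddGroup G] [DecidableEq G] [CommRing R] [AddCommGroup M] [Module R M]
    (𝒜 : G → AddSubgroup R) (ℳ : G → AddSubgroup M)
    [DirectSum.Decomposition ℳ] [SetLike.GradedSMul 𝒜 ℳ]
    (s : R)
    (h : ∀ N : Submodule R M, IsGradedSubmodule ℳ N → N ≠ ⊤ → IsGradedSPrime 𝒜 ℳ s N)
    (t : R) (hth : SetLike.IsHomogeneousElem 𝒜 t)
    (htz : ¬ ∃ m : M, m ≠ 0 ∧ SetLike.IsHomogeneousElem ℳ m ∧ t • m = 0) :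
    ∀ m : M, ∃ x : M, t • x = m := by
  obtain ⟨g, htg⟩ := hth
  have hreg : IsSMulRegular M t := isSMulRegular_of_forall_homogeneous htg
    fun m hm htm => by_contra fun hm0 => htz ⟨m, hm0, hm, htm⟩
  set T : Submodule R M := t • ⊤
  have hT : IsGradedSubmodule ℳ T :=
    IsGradedSubmodule.pointwise_smul (ℳ := ℳ) (N := ⊤) (fun _ _ _ => trivial) htg
  suffices T = ⊤ from fun m => by
    obtain ⟨x, -, hx⟩ :=
      (Submodule.mem_smul_pointwise_iff_exists m t ⊤).1 (this ▸ Submodule.mem_top)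
    exact ⟨x, hx⟩
  by_contra hT_ne
  have hTT_ne : t • T ≠ ⊤ := fun he =>
    hT_ne (eq_top_iff.2 (he ▸ Submodule.smul_le_self_of_tower t T))
  refine (h T hT hT_ne).1 (Submodule.mem_colon_top_of_forall_homogeneous (ℳ := ℳ) fun c hc => ?_)
  exact (h (t • T) (hT.pointwise_smul htg) hTT_ne).smul_mem_of_pointwise_smul htg hreg hc
    (Submodule.smul_mem_pointwise_smul c t ⊤ trivial)

/-- if `M` is finitely generated and every proper graded submodule is graded
`s`-prime, then every homogeneous non-zero-divisor `t` of `M` satisfies `tM = M`. -/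
theorem stmt_6 [AddGroup G] [DecidableEq G] [CommRing R] [AddCommGroup M] [Module R M]
    (𝒜 : G → AddSubgroup R) (ℳ : G → AddSubgroup M)
    [GradedRing 𝒜] [DirectSum.Decomposition ℳ] [SetLike.GradedSMul 𝒜 ℳ]
    [Module.Finite R M]
    (s : R) (hs0 : s ≠ 0) (hsh : SetLike.IsHomogeneousElem 𝒜 s)
    (h : ∀ N : Submodule R M, IsGradedSubmodule ℳ N → N ≠ ⊤ → IsGradedSPrime 𝒜 ℳ s N)
    (t : R) (hth : SetLike.IsHomogeneousElem 𝒜 t)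
    (htz : ¬ ∃ m : M, m ≠ 0 ∧ SetLike.IsHomogeneousElem ℳ m ∧ t • m = 0) :
    ∀ m : M, ∃ x : M, t • x = m :=
  stmt_6_general 𝒜 ℳ s h t hth htz
end

section
/- Let M be a finitely generated graded multiplication R-module and s a nonzero homogeneous element of R. If every proper graded submodule of M is graded s-prime, then M is a graded simple R-module. -/
open DirectSum

variable {G R M : Type*}

/-! Choose a homogeneous `a ∈ (N :_R M)` with `aM ≠ 0`; it exists because `N = (N :_R M)M` and
the colon ideal of a graded submodule is graded. For homogeneous `m`, the `s`-primeness of `a²M`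
gives `s a m = a² x` with `s m - a x` homogeneous, so `a (s m - a x) = 0`. The `s`-primeness of `0`
then gives `s (s m - a x) = 0`, the other alternative `s a M = 0` being excluded since `ker a` would
be a proper graded submodule containing `sM`. Hence `s² M ⊆ aM ⊆ N`. This is impossible: if
`s^(j+1) M ⊆ K` with `K` proper graded, then `sM + K` is a graded submodule with
`s ∈ (sM + K :_R M)`, so it is `M`, whence `s^j M ⊆ K`; descending, `M ⊆ K`. -/

open SetLike

section Components

variable [Ring R] [AddCommGroup M] [Module R M] {𝒜 : G → AddSubgroup R} {ℳ : G → AddSubgroup M}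

theorem smul_mem_add_of_mem [Add G] [GradedSMul 𝒜 ℳ] {c : R} {m : M} {g i : G}
    (hc : c ∈ 𝒜 g) (hm : m ∈ ℳ i) : c • m ∈ ℳ (g + i) :=
  GradedSMul.smul_mem hc hm

variable [DecidableEq G] [Decomposition ℳ]

theorem coe_decompose_smul_add_of_left_mem [AddLeftCancelMonoid G] [GradedSMul 𝒜 ℳ]
    {c : R} {g : G} (hc : c ∈ 𝒜 g) (m : M) (i : G) :
    (decompose ℳ (c • m) (g + i) : M) = c • (decompose ℳ m i : M) := by
  induction m using Decomposition.inductionOn ℳ with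
  | zero => simp
  | @homogeneous j x =>
    obtain ⟨x, hx⟩ := x
    by_cases hij : j = i
    · subst hij
      rw [decompose_of_mem_same ℳ (smul_mem_add_of_mem hc hx), decompose_of_mem_same ℳ hx]
    · rw [decompose_of_mem_ne ℳ (smul_mem_add_of_mem hc hx) (hij ∘ add_left_cancel),
        decompose_of_mem_ne ℳ hx hij, smul_zero]
  | add x y ihx ihy =>
    simp only [smul_add, decompose_add, DirectSum.add_apply, AddSubgroup.coe_add, ihx, ihy]

theorem coe_decompose_smul_of_left_mem [AddGroup G] [GradedSMul 𝒜 ℳ]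
    {c : R} {g : G} (hc : c ∈ 𝒜 g) (m : M) (i : G) :
    (decompose ℳ (c • m) i : M) = c • (decompose ℳ m (-g + i) : M) := by
  rw [← coe_decompose_smul_add_of_left_mem hc, add_neg_cancel_left]

theorem coe_decompose_smul_add_of_right_mem_s7 [AddRightCancelMonoid G] [Decomposition 𝒜]
    [GradedSMul 𝒜 ℳ] {m : M} {i : G} (hm : m ∈ ℳ i) (c : R) (g : G) :
    (decompose ℳ (c • m) (g + i) : M) = (decompose 𝒜 c g : R) • m := by
  induction c using Decomposition.inductionOn 𝒜 with
  | zero => simp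
  | @homogeneous j x =>
    obtain ⟨x, hx⟩ := x
    by_cases hjg : j = g
    · subst hjg
      rw [decompose_of_mem_same ℳ (smul_mem_add_of_mem hx hm), decompose_of_mem_same 𝒜 hx]
    · rw [decompose_of_mem_ne ℳ (smul_mem_add_of_mem hx hm) (hjg ∘ add_right_cancel),
        decompose_of_mem_ne 𝒜 hx hjg, zero_smul]
  | add x y ihx ihy =>
    simp only [add_smul, decompose_add, DirectSum.add_apply, AddSubgroup.coe_add, ihx, ihy]

end Components

section GradedSubmodules

variable [DecidableEq G] [CommRing R] [AddCommGroup M] [Module R M]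
  {𝒜 : G → AddSubgroup R} {ℳ : G → AddSubgroup M} [Decomposition ℳ]

variable (ℳ) in
theorem isGradedSubmodule_bot : IsGradedSubmodule ℳ (⊥ : Submodule R M) := by
  rintro m hm g
  rw [Submodule.mem_bot] at hm ⊢
  simp [hm]

theorem IsGradedSubmodule.sup {K₁ K₂ : Submodule R M} (h₁ : IsGradedSubmodule ℳ K₁)
    (h₂ : IsGradedSubmodule ℳ K₂) : IsGradedSubmodule ℳ (K₁ ⊔ K₂) := by
  intro m hm g
  obtain ⟨y, hy, z, hz, rfl⟩ := Submodule.mem_sup.mp hm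
  rw [decompose_add, DirectSum.add_apply, AddSubgroup.coe_add]
  exact Submodule.add_mem_sup (h₁ y hy g) (h₂ z hz g)

variable (ℳ) in
theorem mem_colon_top_of_forall_homogeneous {K : Submodule R M} {c : R}
    (hc : ∀ (i : G) (m : M), m ∈ ℳ i → c • m ∈ K) : c ∈ K.colon ⊤ := by
  classical
  refine Submodule.mem_colon.2 fun m _ => ?_
  rw [← sum_support_decompose ℳ m, Finset.smul_sum]
  exact Submodule.sum_mem _ fun i _ => hc i _ (coe_mem _)

variable [AddGroup G] [GradedSMul 𝒜 ℳ] {c : R} {g : G}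

variable (ℳ) in
theorem isGradedSubmodule_range_lsmul (hc : c ∈ 𝒜 g) :
    IsGradedSubmodule ℳ (LinearMap.range (LinearMap.lsmul R M c)) := by
  rintro _ ⟨m, rfl⟩ i
  rw [LinearMap.lsmul_apply, coe_decompose_smul_of_left_mem hc]
  exact ⟨_, rfl⟩

variable (ℳ) in
theorem isGradedSubmodule_ker_lsmul (hc : c ∈ 𝒜 g) :
    IsGradedSubmodule ℳ (LinearMap.ker (LinearMap.lsmul R M c)) := by
  intro m hm i
  rw [LinearMap.mem_ker, LinearMap.lsmul_apply] at hm ⊢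
  rw [← coe_decompose_smul_add_of_left_mem hc, hm, decompose_zero, DirectSum.zero_apply,
    ZeroMemClass.coe_zero]

theorem IsGradedSubmodule.isGradedIdeal_colon_s7 [Decomposition 𝒜] {N : Submodule R M}
    (hN : IsGradedSubmodule ℳ N) : IsGradedIdeal 𝒜 (N.colon ⊤) := by
  intro b hb g
  refine mem_colon_top_of_forall_homogeneous ℳ fun i m hm => ?_
  rw [← coe_decompose_smul_add_of_right_mem_s7 hm b g]
  exact hN _ (Submodule.mem_colon.1 hb m trivial) _

variable (𝒜) in
theorem IsGradedSubmodule.exists_homogeneous_mem_colon_notMem_annihilator [GradedRing 𝒜]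
    {N : Submodule R M} (hN : IsGradedSubmodule ℳ N) (hN_mult : N = N.colon ⊤ • ⊤)
    (hN0 : N ≠ ⊥) :
    ∃ a, IsHomogeneousElem 𝒜 a ∧ a ∈ N.colon ⊤ ∧ a ∉ Module.annihilator R M := by
  by_contra! hcon
  have hI : (N.colon ⊤).IsHomogeneous 𝒜 := fun i _ hr => hN.isGradedIdeal_colon_s7 _ hr i
  refine hN0 (hN_mult.trans (Submodule.le_annihilator_iff.1 ?_))
  rw [← hI.toIdeal_homogeneousCore_eq_self, Submodule.annihilator_top]
  exact Ideal.span_le.2 fun _ ⟨⟨a, ha⟩, haN, hx⟩ => hx ▸ hcon a ha haN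

end GradedSubmodules

section SPrime

variable [AddGroup G] [DecidableEq G] [CommRing R] [AddCommGroup M] [Module R M]
  {𝒜 : G → AddSubgroup R} {ℳ : G → AddSubgroup M} [Decomposition ℳ] [GradedSMul 𝒜 ℳ] {s : R}

theorem pow_notMem_colon_of_forall_notMem_colon (hsh : IsHomogeneousElem 𝒜 s)
    (hs : ∀ K : Submodule R M, IsGradedSubmodule ℳ K → K ≠ ⊤ → s ∉ K.colon ⊤) (j : ℕ)
    {K : Submodule R M} (hK : IsGradedSubmodule ℳ K) (hKt : K ≠ ⊤) : s ^ j ∉ K.colon ⊤ := by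
  induction j with
  | zero =>
    rw [pow_zero, ← Ideal.eq_top_iff_one, Submodule.colon_eq_top_iff_subset]
    exact fun h => hKt (eq_top_iff.2 fun m _ => h trivial)
  | succ j ih =>
    intro hsj
    obtain ⟨d, hsd⟩ := hsh
    have htop : LinearMap.range (LinearMap.lsmul R M s) ⊔ K = ⊤ := by
      by_contra hne
      refine hs _ ((isGradedSubmodule_range_lsmul ℳ hsd).sup hK) hne
        (Submodule.mem_colon.2 fun m _ => Submodule.mem_sup_left ⟨m, rfl⟩)
    refine ih (Submodule.mem_colon.2 fun m _ => ?_)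
    obtain ⟨_, ⟨x, rfl⟩, k, hk, rfl⟩ := Submodule.mem_sup.1 (htop ▸ Submodule.mem_top : m ∈ _)
    rw [smul_add, LinearMap.lsmul_apply, smul_smul, ← pow_succ]
    exact K.add_mem (Submodule.mem_colon.1 hsj x trivial) (K.smul_mem _ hk)

theorem mem_annihilator_of_mul_mem_annihilator
    (hs : ∀ K : Submodule R M, IsGradedSubmodule ℳ K → K ≠ ⊤ → s ∉ K.colon ⊤)
    {b : R} (hb : IsHomogeneousElem 𝒜 b) (hsb : s * b ∈ Module.annihilator R M) :
    b ∈ Module.annihilator R M := by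
  obtain ⟨g, hbg⟩ := hb
  by_contra hbM
  refine hs _ (isGradedSubmodule_ker_lsmul ℳ hbg) (fun htop => hbM ?_) ?_
  · exact Module.mem_annihilator.2 fun m => (htop ▸ Submodule.mem_top : m ∈ _)
  · refine Submodule.mem_colon.2 fun m _ => ?_
    rw [LinearMap.mem_ker, LinearMap.lsmul_apply, smul_smul, mul_comm]
    exact Module.mem_annihilator.1 hsb m

theorem exists_sub_smul_mem_and_smul_eq_zero {a : R} {g d i : G} {m : M} (ha : a ∈ 𝒜 g)
    (hsd : s ∈ 𝒜 d) (hm : m ∈ ℳ i)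
    (hK : IsGradedSPrime 𝒜 ℳ s (LinearMap.range (LinearMap.lsmul R M (a * a)))) :
    ∃ x : M, s • m - a • x ∈ ℳ (d + i) ∧ a • (s • m - a • x) = 0 := by
  have hsam : s • a • m ∈ LinearMap.range (LinearMap.lsmul R M (a * a)) := by
    rcases hK.2 a (a • m) ⟨g, ha⟩ ⟨_, smul_mem_add_of_mem ha hm⟩ ⟨m, mul_smul a a m⟩ with
      hsa | hsam
    · exact smul_smul s a m ▸ Submodule.mem_colon.1 hsa m trivial
    · exact hsam
  obtain ⟨y, hy⟩ := hsam
  rw [LinearMap.lsmul_apply, mul_smul, smul_comm s a] at hy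
  refine ⟨decompose ℳ y (-g + (d + i)), sub_mem (smul_mem_add_of_mem hsd hm) ?_, ?_⟩
  · simpa using smul_mem_add_of_mem ha (coe_mem (decompose ℳ y (-g + (d + i))))
  · -- the degree `d + i` component of `s • m - a • y`, which `a` kills
    have hy0 : a • (s • m - a • y) = 0 := by rw [smul_sub, hy, sub_self]
    have := isGradedSubmodule_ker_lsmul (R := R) ℳ ha _ hy0 (d + i)
    rwa [LinearMap.mem_ker, LinearMap.lsmul_apply, decompose_sub, DirectSum.sub_apply,
      AddSubgroupClass.coe_sub, decompose_of_mem_same ℳ (smul_mem_add_of_mem hsd hm),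
      coe_decompose_smul_of_left_mem ha] at this

end SPrime

theorem stmt_7_general [AddGroup G] [DecidableEq G] [CommRing R] [AddCommGroup M] [Module R M]
    (𝒜 : G → AddSubgroup R) (ℳ : G → AddSubgroup M)
    [GradedRing 𝒜] [DirectSum.Decomposition ℳ] [SetLike.GradedSMul 𝒜 ℳ]
    (hmult : ∀ K : Submodule R M, IsGradedSubmodule ℳ K → K = K.colon ⊤ • (⊤ : Submodule R M))
    (s : R) (hsh : SetLike.IsHomogeneousElem 𝒜 s)
    (h : ∀ N : Submodule R M, IsGradedSubmodule ℳ N → N ≠ ⊤ → IsGradedSPrime 𝒜 ℳ s N) :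
    ∀ N : Submodule R M, IsGradedSubmodule ℳ N → N = ⊥ ∨ N = ⊤ := by
  intro N hN
  by_contra! ⟨hN0, hNt⟩
  have hs : ∀ K : Submodule R M, IsGradedSubmodule ℳ K → K ≠ ⊤ → s ∉ K.colon ⊤ :=
    fun K hK hKt => (h K hK hKt).1
  obtain ⟨a, ⟨g, ha⟩, haN, haM⟩ :=
    hN.exists_homogeneous_mem_colon_notMem_annihilator 𝒜 (hmult N hN) hN0
  have haaN : LinearMap.range (LinearMap.lsmul R M (a * a)) ≤ N := by
    rintro _ ⟨m, rfl⟩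
    rw [LinearMap.lsmul_apply, mul_smul]
    exact Submodule.mem_colon.1 haN _ trivial
  have hK := h _ (isGradedSubmodule_range_lsmul ℳ (mul_mem_graded ha ha))
    (ne_top_of_le_ne_top hNt haaN)
  have hbot := h ⊥ (isGradedSubmodule_bot ℳ) fun hbot => haM <|
    Module.mem_annihilator.2 fun m => (hbot ▸ Submodule.mem_top : a • m ∈ ⊥)
  obtain ⟨d, hsd⟩ := hsh
  refine pow_notMem_colon_of_forall_notMem_colon ⟨d, hsd⟩ hs 2 hN hNt
    (mem_colon_top_of_forall_homogeneous ℳ fun i m hm => ?_)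
  obtain ⟨x, hxh, hx0⟩ := exists_sub_smul_mem_and_smul_eq_zero ha hsd hm hK
  rcases hbot.2 a _ ⟨g, ha⟩ ⟨_, hxh⟩ hx0 with hsa | hsx
  · refine absurd (mem_annihilator_of_mul_mem_annihilator hs ⟨g, ha⟩ ?_) haM
    exact Module.mem_annihilator.2 fun m => Submodule.mem_bot R |>.1 <|
      Submodule.mem_colon.1 hsa m trivial
  · rw [Submodule.mem_bot, smul_sub, sub_eq_zero] at hsx
    rw [pow_two, mul_smul, hsx, smul_comm]
    exact Submodule.mem_colon.1 haN _ trivial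

/-- a finitely generated graded multiplication module in which every proper
graded submodule is graded `s`-prime is graded simple. -/
theorem stmt_7 [AddGroup G] [DecidableEq G] [CommRing R] [AddCommGroup M] [Module R M]
    (𝒜 : G → AddSubgroup R) (ℳ : G → AddSubgroup M)
    [GradedRing 𝒜] [DirectSum.Decomposition ℳ] [SetLike.GradedSMul 𝒜 ℳ]
    [Module.Finite R M]
    (hmult : ∀ K : Submodule R M, IsGradedSubmodule ℳ K → K = K.colon ⊤ • (⊤ : Submodule R M))
    (s : R) (hs0 : s ≠ 0) (hsh : SetLike.IsHomogeneousElem 𝒜 s)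
    (h : ∀ N : Submodule R M, IsGradedSubmodule ℳ N → N ≠ ⊤ → IsGradedSPrime 𝒜 ℳ s N) :
    ∀ N : Submodule R M, IsGradedSubmodule ℳ N → N = ⊥ ∨ N = ⊤ :=
  stmt_7_general 𝒜 ℳ hmult s hsh h
end

section
/- Let R be a G-graded commutative ring and s a nonzero homogeneous element. If every proper graded ideal of R is graded s-prime, then R is a graded field, i.e., every nonzero homogeneous element of R is a unit. -/
/-! The annihilator of a nonzero homogeneous element is a proper graded ideal, and `s` is not in
it, so `s` kills no nonzero homogeneous element; together with `s`-primality of `0` this makes `R`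
a graded domain. If a nonzero homogeneous `x` were not a unit, `s`-primality of `(x²)` would give
`s x = t x²` with `t` homogeneous, so `x (s - t x) = 0`, hence `s = t x ∈ (x)`, contradicting
`s`-primality of the proper ideal `(x)`. -/

open DirectSum

variable {G R M : Type*}

open SetLike

theorem Ideal.IsHomogeneous.isGradedIdeal [AddMonoid G] [DecidableEq G] [CommRing R]
    {𝒜 : G → AddSubgroup R} [GradedRing 𝒜] {I : Ideal R} (hI : I.IsHomogeneous 𝒜) :
    IsGradedIdeal 𝒜 I :=
  fun _ hr g => hI g hr

section GradedCommSemiring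

variable {ι σ A : Type*} [AddRightCancelMonoid ι] [DecidableEq ι] [CommSemiring A] [SetLike σ A]
  [AddSubmonoidClass σ A] (𝒜 : ι → σ) [GradedRing 𝒜]

theorem Ideal.isHomogeneous_annihilator_span_singleton {z : A} (hz : IsHomogeneousElem 𝒜 z) :
    (Ideal.span {z}).annihilator.IsHomogeneous 𝒜 := by
  obtain ⟨j, hzj⟩ := hz
  intro i r hr
  rw [Submodule.mem_annihilator_span_singleton, smul_eq_mul] at hr ⊢
  rw [← coe_decompose_mul_add_of_right_mem 𝒜 hzj, hr, decompose_zero, DirectSum.zero_apply,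
    ZeroMemClass.coe_zero]

theorem exists_mem_graded_mul_eq_of_dvd {i j : ι} {w y : A} (hw : w ∈ 𝒜 (i + j)) (hy : y ∈ 𝒜 j)
    (hdvd : y ∣ w) : ∃ t ∈ 𝒜 i, w = t * y := by
  obtain ⟨c, rfl⟩ := hdvd
  refine ⟨decompose 𝒜 c i, SetLike.coe_mem _, ?_⟩
  rw [← coe_decompose_mul_add_of_right_mem 𝒜 hy, mul_comm c, decompose_of_mem_same 𝒜 hw]

end GradedCommSemiring

section ProperGradedIdealsSPrime

variable [AddGroup G] [DecidableEq G] [CommRing R] (𝒜 : G → AddSubgroup R) [GradedRing 𝒜] {s : R}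

theorem mul_ne_zero_of_forall_isGradedSPrimeIdeal
    (h : ∀ P : Ideal R, IsGradedIdeal 𝒜 P → P ≠ ⊤ → IsGradedSPrimeIdeal 𝒜 s P)
    {z : R} (hz0 : z ≠ 0) (hz : IsHomogeneousElem 𝒜 z) : s * z ≠ 0 := by
  have hann := Ideal.isHomogeneous_annihilator_span_singleton 𝒜 hz
  have hproper : (Ideal.span {z}).annihilator ≠ ⊤ := by
    rwa [Ideal.ne_top_iff_one, Submodule.mem_annihilator_span_singleton, one_smul]
  simpa [Submodule.mem_annihilator_span_singleton] using (h _ hann.isGradedIdeal hproper).1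

theorem eq_zero_or_eq_zero_of_forall_isGradedSPrimeIdeal [Nontrivial R]
    (h : ∀ P : Ideal R, IsGradedIdeal 𝒜 P → P ≠ ⊤ → IsGradedSPrimeIdeal 𝒜 s P)
    {a b : R} (ha : IsHomogeneousElem 𝒜 a) (hb : IsHomogeneousElem 𝒜 b) (hab : a * b = 0) :
    a = 0 ∨ b = 0 := by
  by_contra! hne
  have hbot := (h ⊥ (Ideal.IsHomogeneous.bot 𝒜).isGradedIdeal bot_ne_top).2 a b ha hb
    (Ideal.mem_bot.2 hab)
  simp only [Ideal.mem_bot] at hbot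
  exact hbot.elim (mul_ne_zero_of_forall_isGradedSPrimeIdeal 𝒜 h hne.1 ha)
    (mul_ne_zero_of_forall_isGradedSPrimeIdeal 𝒜 h hne.2 hb)

theorem isGradedSPrimeIdeal_span_singleton
    (h : ∀ P : Ideal R, IsGradedIdeal 𝒜 P → P ≠ ⊤ → IsGradedSPrimeIdeal 𝒜 s P)
    {y : R} (hy : IsHomogeneousElem 𝒜 y) (hyu : ¬IsUnit y) :
    IsGradedSPrimeIdeal 𝒜 s (Ideal.span {y}) :=
  h _ (Ideal.homogeneous_span 𝒜 {y} (by simpa using hy)).isGradedIdeal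
    (mt Ideal.span_singleton_eq_top.1 hyu)

end ProperGradedIdealsSPrime

theorem stmt_8_general [AddGroup G] [DecidableEq G] [CommRing R] [Nontrivial R]
    (𝒜 : G → AddSubgroup R) [GradedRing 𝒜]
    (s : R) (hsh : SetLike.IsHomogeneousElem 𝒜 s)
    (h : ∀ P : Ideal R, IsGradedIdeal 𝒜 P → P ≠ ⊤ → IsGradedSPrimeIdeal 𝒜 s P) :
    ∀ x : R, x ≠ 0 → SetLike.IsHomogeneousElem 𝒜 x → IsUnit x := by
  intro x hx0 hx
  by_contra hxu
  obtain ⟨a, hsa⟩ := hsh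
  obtain ⟨b, hxb⟩ := hx
  have hdvd : x * x ∣ s * x := by
    have hsq := isGradedSPrimeIdeal_span_singleton 𝒜 h ⟨b + b, mul_mem_graded hxb hxb⟩
      (by rwa [IsUnit.mul_iff, and_self])
    simpa [Ideal.mem_span_singleton] using
      hsq.2 x x ⟨b, hxb⟩ ⟨b, hxb⟩ (Ideal.mem_span_singleton_self _)
  have hsx : s * x ∈ 𝒜 (a - b + (b + b)) := by
    rw [← add_assoc, sub_add_cancel]
    exact mul_mem_graded hsa hxb
  obtain ⟨t, ht, hst⟩ := exists_mem_graded_mul_eq_of_dvd 𝒜 hsx (mul_mem_graded hxb hxb) hdvd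
  have htx : t * x ∈ 𝒜 a := sub_add_cancel a b ▸ mul_mem_graded ht hxb
  have hzero : x * (s - t * x) = 0 := by linear_combination hst
  rcases eq_zero_or_eq_zero_of_forall_isGradedSPrimeIdeal 𝒜 h ⟨b, hxb⟩ ⟨a, sub_mem hsa htx⟩
    hzero with hx | hs
  · exact hx0 hx
  · exact (isGradedSPrimeIdeal_span_singleton 𝒜 h ⟨b, hxb⟩ hxu).1
      (Ideal.mem_span_singleton'.2 ⟨t, (sub_eq_zero.1 hs).symm⟩)

/-- if every proper graded ideal of `R` is graded `s`-prime, then `R` is a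
graded field: every nonzero homogeneous element is a unit. -/
theorem stmt_8 [AddGroup G] [DecidableEq G] [CommRing R] [Nontrivial R]
    (𝒜 : G → AddSubgroup R) [GradedRing 𝒜]
    (s : R) (hs0 : s ≠ 0) (hsh : SetLike.IsHomogeneousElem 𝒜 s)
    (h : ∀ P : Ideal R, IsGradedIdeal 𝒜 P → P ≠ ⊤ → IsGradedSPrimeIdeal 𝒜 s P) :
    ∀ x : R, x ≠ 0 → SetLike.IsHomogeneousElem 𝒜 x → IsUnit x :=
  stmt_8_general 𝒜 s hsh h
end

section
/- Let f : M → T be a graded R-homomorphism of graded R-modules, s a nonzero homogeneous element of R, and K a graded s-prime submodule of T with s ∉ (f⁻¹(K) :_R M). Then f⁻¹(K) is a graded s-prime submodule of M. -/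
open DirectSum

variable {G R M : Type*}

theorem Submodule.comap_colon {R M T : Type*} [Semiring R] [AddCommMonoid M] [Module R M]
    [AddCommMonoid T] [Module R T] (f : M →ₗ[R] T) (K : Submodule R T) (S : Set M) :
    (K.comap f).colon S = K.colon (f '' S) := by
  ext r
  simp [Submodule.mem_colon]

theorem Submodule.colon_top_le_comap_colon_top {R M T : Type*} [Semiring R] [AddCommMonoid M]
    [Module R M] [AddCommMonoid T] [Module R T] (f : M →ₗ[R] T) (K : Submodule R T) :
    K.colon ⊤ ≤ (K.comap f).colon ⊤ := by
  rw [Submodule.comap_colon]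
  exact Submodule.colon_mono le_rfl (Set.subset_univ _)

theorem IsGradedSPrime.comap {T : Type*} [CommRing R] [AddCommGroup M] [Module R M]
    [AddCommGroup T] [Module R T] {𝒜 : G → AddSubgroup R} {ℳ : G → AddSubgroup M}
    {𝒯 : G → AddSubgroup T} {s : R} {K : Submodule R T} (hK : IsGradedSPrime 𝒜 𝒯 s K)
    (f : M →ₗ[R] T)
    (hf : ∀ m, SetLike.IsHomogeneousElem ℳ m → SetLike.IsHomogeneousElem 𝒯 (f m))
    (hs : s ∉ (K.comap f).colon ⊤) :
    IsGradedSPrime 𝒜 ℳ s (K.comap f) := by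
  refine ⟨hs, fun r m hr hm hrm => ?_⟩
  have hrfm : r • f m ∈ K := by simpa using hrm
  exact (hK.2 r (f m) hr (hf m hm) hrfm).imp
    (fun h => Submodule.colon_top_le_comap_colon_top f K h)
    (fun h => by simpa using h)

theorem stmt_9_general {T : Type*} [CommRing R]
    [AddCommGroup M] [Module R M] [AddCommGroup T] [Module R T]
    (𝒜 : G → AddSubgroup R) (ℳ : G → AddSubgroup M) (𝒯 : G → AddSubgroup T)
    (f : M →ₗ[R] T) (hf : ∀ g : G, ∀ m ∈ ℳ g, f m ∈ 𝒯 g)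
    (s : R)
    (K : Submodule R T)
    (hKp : IsGradedSPrime 𝒜 𝒯 s K)
    (hs : s ∉ (K.comap f).colon ⊤) :
    IsGradedSPrime 𝒜 ℳ s (K.comap f) :=
  hKp.comap f (fun _ ⟨g, hm⟩ => ⟨g, hf g _ hm⟩) hs

/-- preimage of a graded `s`-prime submodule under a graded homomorphism is
graded `s`-prime, provided `s ∉ (f⁻¹(K) :_R M)`. -/
theorem stmt_9 {T : Type*} [AddGroup G] [DecidableEq G] [CommRing R]
    [AddCommGroup M] [Module R M] [AddCommGroup T] [Module R T]
    (𝒜 : G → AddSubgroup R) (ℳ : G → AddSubgroup M) (𝒯 : G → AddSubgroup T)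
    [GradedRing 𝒜] [DirectSum.Decomposition ℳ] [SetLike.GradedSMul 𝒜 ℳ]
    [DirectSum.Decomposition 𝒯] [SetLike.GradedSMul 𝒜 𝒯]
    (f : M →ₗ[R] T) (hf : ∀ g : G, ∀ m ∈ ℳ g, f m ∈ 𝒯 g)
    (s : R) (hs0 : s ≠ 0) (hsh : SetLike.IsHomogeneousElem 𝒜 s)
    (K : Submodule R T) (hK : IsGradedSubmodule 𝒯 K)
    (hKp : IsGradedSPrime 𝒜 𝒯 s K)
    (hs : s ∉ (K.comap f).colon ⊤) :
    IsGradedSPrime 𝒜 ℳ s (K.comap f) :=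
  stmt_9_general 𝒜 ℳ 𝒯 f hf s K hKp hs
end

section
/- Let f : M → T be a surjective graded R-homomorphism and N a graded s-prime submodule of M with ker(f) ⊆ N, where s is a nonzero homogeneous element of R. Then f(N) is a graded s-prime submodule of T. -/
open DirectSum

variable {G R M : Type*}

/-
Homogeneous elements of `T` lift to homogeneous elements of `M` of the same degree (take the
degree-`i` component of any preimage), and since `ker f ≤ N`, membership in `N` can be tested
after applying `f`. Hence `(f N :_R T) = (N :_R M)` and both conditions of `s`-primeness
transfer directly from `N` to `f(N)`.
-/

section GradedMap

variable {ι σ τ M T F : Type*} [DecidableEq ι] [AddCommMonoid M] [AddCommMonoid T]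
  [SetLike σ M] [AddSubmonoidClass σ M] [SetLike τ T] [AddSubmonoidClass τ T]
  (ℳ : ι → σ) (𝒯 : ι → τ) [DirectSum.Decomposition ℳ] [DirectSum.Decomposition 𝒯]
  [FunLike F M T] [AddMonoidHomClass F M T] {f : F}

theorem DirectSum.decompose_apply_map_of_map_mem (hf : ∀ i, ∀ m ∈ ℳ i, f m ∈ 𝒯 i)
    (m : M) (i : ι) :
    (decompose 𝒯 (f m) i : T) = f (decompose ℳ m i) := by
  induction m using DirectSum.Decomposition.inductionOn ℳ with
  | zero => simp
  | @homogeneous j x =>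
    obtain rfl | hji := eq_or_ne j i
    · rw [decompose_of_mem_same ℳ x.2, decompose_of_mem_same 𝒯 (hf j x x.2)]
    · rw [decompose_of_mem_ne ℳ x.2 hji, decompose_of_mem_ne 𝒯 (hf j x x.2) hji, map_zero]
  | add a b ha hb => simp [ha, hb]

theorem DirectSum.exists_mem_eq_of_surjective_of_map_mem (hf : ∀ i, ∀ m ∈ ℳ i, f m ∈ 𝒯 i)
    (hsurj : Function.Surjective f) {i : ι} {t : T} (ht : t ∈ 𝒯 i) :
    ∃ m ∈ ℳ i, f m = t := by
  obtain ⟨m, rfl⟩ := hsurj t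
  refine ⟨decompose ℳ m i, SetLike.coe_mem _, ?_⟩
  rw [← decompose_apply_map_of_map_mem ℳ 𝒯 hf, decompose_of_mem_same 𝒯 ht]

end GradedMap

theorem Submodule.map_colon_top_of_surjective {R M T : Type*} [Ring R] [AddCommGroup M]
    [Module R M] [AddCommGroup T] [Module R T] {f : M →ₗ[R] T} (hsurj : Function.Surjective f)
    {N : Submodule R M} (hker : LinearMap.ker f ≤ N) :
    (N.map f).colon ⊤ = N.colon ⊤ := by
  ext r
  simp only [mem_colon, Set.top_eq_univ, Set.mem_univ, forall_const, hsurj.forall, ← map_smul,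
    ← mem_comap, comap_map_eq_self hker]

theorem stmt_10_general {T : Type*} [DecidableEq G] [CommRing R]
    [AddCommGroup M] [Module R M] [AddCommGroup T] [Module R T]
    (𝒜 : G → AddSubgroup R) (ℳ : G → AddSubgroup M) (𝒯 : G → AddSubgroup T)
    [DirectSum.Decomposition ℳ]
    [DirectSum.Decomposition 𝒯]
    (f : M →ₗ[R] T) (hf : ∀ g : G, ∀ m ∈ ℳ g, f m ∈ 𝒯 g)
    (hsurj : Function.Surjective f)
    (s : R)
    (N : Submodule R M)
    (hNp : IsGradedSPrime 𝒜 ℳ s N)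
    (hker : LinearMap.ker f ≤ N) :
    IsGradedSPrime 𝒜 𝒯 s (N.map f) := by
  obtain ⟨hs, hprime⟩ := hNp
  have hcolon := Submodule.map_colon_top_of_surjective hsurj hker
  refine ⟨hcolon ▸ hs, fun r t hr ⟨i, ht⟩ hrt => ?_⟩
  obtain ⟨m, hm, rfl⟩ := DirectSum.exists_mem_eq_of_surjective_of_map_mem ℳ 𝒯 hf hsurj ht
  have hrm : r • m ∈ N := by
    rwa [← Submodule.comap_map_eq_self hker, Submodule.mem_comap, map_smul]
  rw [hcolon]
  exact (hprime r m hr ⟨i, hm⟩ hrm).imp_right fun h => ⟨s • m, h, map_smul f s m⟩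

/-- image of a graded `s`-prime submodule containing the kernel, under a
surjective graded homomorphism, is graded `s`-prime. -/
theorem stmt_10 {T : Type*} [AddGroup G] [DecidableEq G] [CommRing R]
    [AddCommGroup M] [Module R M] [AddCommGroup T] [Module R T]
    (𝒜 : G → AddSubgroup R) (ℳ : G → AddSubgroup M) (𝒯 : G → AddSubgroup T)
    [GradedRing 𝒜] [DirectSum.Decomposition ℳ] [SetLike.GradedSMul 𝒜 ℳ]
    [DirectSum.Decomposition 𝒯] [SetLike.GradedSMul 𝒜 𝒯]
    (f : M →ₗ[R] T) (hf : ∀ g : G, ∀ m ∈ ℳ g, f m ∈ 𝒯 g)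
    (hsurj : Function.Surjective f)
    (s : R) (hs0 : s ≠ 0) (hsh : SetLike.IsHomogeneousElem 𝒜 s)
    (N : Submodule R M) (hN : IsGradedSubmodule ℳ N)
    (hNp : IsGradedSPrime 𝒜 ℳ s N)
    (hker : LinearMap.ker f ≤ N) :
    IsGradedSPrime 𝒜 𝒯 s (N.map f) :=
  stmt_10_general 𝒜 ℳ 𝒯 f hf hsurj s N hNp hker
end

section
/- Let M be a graded R-module, L ⊆ N submodules of M with L graded. Then N is a graded s-prime submodule of M if and only if N/L is a graded s-prime submodule of M/L, for any nonzero homogeneous s. -/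
open DirectSum

variable {G R M : Type*}

/-! Since `L ≤ N`, the submodule `N` is the preimage of `N/L` under the surjection `M → M/L`.
Pulling back along a surjection whose target carries the image grading changes neither the colon
ideal nor, up to lifting, the homogeneous elements, so it preserves graded `s`-primeness. -/

variable {M' : Type*}

theorem Submodule.colon_univ_comap_of_surjective [Semiring R] [AddCommMonoid M] [Module R M]
    [AddCommMonoid M'] [Module R M'] {f : M →ₗ[R] M'} (hf : Function.Surjective f)
    (K : Submodule R M') : (K.comap f).colon Set.univ = K.colon Set.univ := by
  ext r
  simp only [mem_colon, Set.mem_univ, true_implies, mem_comap, map_smul]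
  exact (hf.forall (p := fun y => r • y ∈ K)).symm

theorem SetLike.isHomogeneousElem_map_iff [AddCommGroup M] [AddCommGroup M']
    (ℳ : G → AddSubgroup M) (f : M →+ M') {x : M'} :
    IsHomogeneousElem (fun g => (ℳ g).map f) x ↔ ∃ m, IsHomogeneousElem ℳ m ∧ f m = x := by
  constructor
  · rintro ⟨g, m, hm, rfl⟩
    exact ⟨m, ⟨g, hm⟩, rfl⟩
  · rintro ⟨m, ⟨g, hm⟩, rfl⟩
    exact ⟨g, m, hm, rfl⟩

theorem isGradedSPrime_comap_iff [CommRing R] [AddCommGroup M] [Module R M] [AddCommGroup M']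
    [Module R M'] (𝒜 : G → AddSubgroup R) (ℳ : G → AddSubgroup M) (s : R)
    {f : M →ₗ[R] M'} (hf : Function.Surjective f) (K : Submodule R M') :
    IsGradedSPrime 𝒜 ℳ s (K.comap f) ↔
      IsGradedSPrime 𝒜 (fun g => (ℳ g).map f.toAddMonoidHom) s K := by
  simp only [IsGradedSPrime, Set.top_eq_univ, Submodule.colon_univ_comap_of_surjective hf,
    SetLike.isHomogeneousElem_map_iff, Submodule.mem_comap, map_smul, LinearMap.toAddMonoidHom_coe]
  refine and_congr_right fun _ => forall_congr' fun r => ⟨?_, ?_⟩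
  · rintro h _ hr ⟨m, hm, rfl⟩
    exact h m hr hm
  · intro h m hr hm
    exact h (f m) hr ⟨m, hm, rfl⟩

theorem stmt_11_general [CommRing R] [AddCommGroup M] [Module R M]
    (𝒜 : G → AddSubgroup R) (ℳ : G → AddSubgroup M)
    (L N : Submodule R M) (hLN : L ≤ N)
    (s : R) :
    IsGradedSPrime 𝒜 ℳ s N ↔
      IsGradedSPrime 𝒜 (fun g : G => (ℳ g).map L.mkQ.toAddMonoidHom) s (N.map L.mkQ) := by
  have hN : (N.map L.mkQ).comap L.mkQ = N := by
    rw [Submodule.comap_map_mkQ, sup_eq_right.mpr hLN]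
  simpa only [hN] using isGradedSPrime_comap_iff 𝒜 ℳ s L.mkQ_surjective (N.map L.mkQ)

/-- for a graded submodule `L ≤ N`, `N` is graded `s`-prime in `M` iff
`N/L` is graded `s`-prime in `M/L` (with the quotient grading `(M/L)_g = (M_g + L)/L`). -/
theorem stmt_11 [AddGroup G] [DecidableEq G] [CommRing R] [AddCommGroup M] [Module R M]
    (𝒜 : G → AddSubgroup R) (ℳ : G → AddSubgroup M)
    [GradedRing 𝒜] [DirectSum.Decomposition ℳ] [SetLike.GradedSMul 𝒜 ℳ]
    (L N : Submodule R M) (hL : IsGradedSubmodule ℳ L) (hLN : L ≤ N)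
    (s : R) (hs0 : s ≠ 0) (hsh : SetLike.IsHomogeneousElem 𝒜 s) :
    IsGradedSPrime 𝒜 ℳ s N ↔
      IsGradedSPrime 𝒜 (fun g : G => (ℳ g).map L.mkQ.toAddMonoidHom) s (N.map L.mkQ) :=
  stmt_11_general 𝒜 ℳ L N hLN s
end

section
/- Let R₁, R₂ be G-graded commutative rings, R = R₁ × R₂, s = (s₁, s₂) a nonzero homogeneous element of R, and P = P₁ × P₂ a graded ideal of R. Then P is a graded s-prime ideal of R if and only if (P₁ is graded s₁-prime in R₁ and s₂ ∈ P₂) or (P₂ is graded s₂-prime in R₂ and s₁ ∈ P₁). -/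
/-!
In `R₁ × R₂` the homogeneous elements `(1, 0)` and `(0, 1)` multiply to `0 ∈ P₁ × P₂`, so an
`(s₁, s₂)`-prime `P₁ × P₂` contains `(s₁, 0)` or `(0, s₂)`, i.e. `s₁ ∈ P₁` or `s₂ ∈ P₂`, and not
both since `s ∉ P₁ × P₂`. Once `s₂ ∈ P₂`, the second coordinate of every `s * x` lies in `P₂`,
so the `(s₁, s₂)`-prime condition on `P₁ × P₂` is exactly the `s₁`-prime condition on `P₁`,
tested on the elements `(a, 0)`.
-/

open DirectSum

variable {G R M : Type*}

section Prod

open SetLike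

variable {ι R₁ R₂ : Type*} [CommRing R₁] [CommRing R₂]
  {𝒜₁ : ι → AddSubgroup R₁} {𝒜₂ : ι → AddSubgroup R₂}

theorem SetLike.IsHomogeneousElem.prod_fst {x : R₁ × R₂}
    (hx : IsHomogeneousElem (fun i => (𝒜₁ i).prod (𝒜₂ i)) x) : IsHomogeneousElem 𝒜₁ x.1 :=
  let ⟨i, hi⟩ := hx
  ⟨i, (AddSubgroup.mem_prod.mp hi).1⟩

theorem SetLike.IsHomogeneousElem.prod_snd {x : R₁ × R₂}
    (hx : IsHomogeneousElem (fun i => (𝒜₁ i).prod (𝒜₂ i)) x) : IsHomogeneousElem 𝒜₂ x.2 :=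
  let ⟨i, hi⟩ := hx
  ⟨i, (AddSubgroup.mem_prod.mp hi).2⟩

theorem SetLike.IsHomogeneousElem.inl {a : R₁} (ha : IsHomogeneousElem 𝒜₁ a) :
    IsHomogeneousElem (fun i => (𝒜₁ i).prod (𝒜₂ i)) (a, 0) :=
  let ⟨i, hi⟩ := ha
  ⟨i, AddSubgroup.mem_prod.mpr ⟨hi, zero_mem _⟩⟩

theorem SetLike.IsHomogeneousElem.inr {b : R₂} (hb : IsHomogeneousElem 𝒜₂ b) :
    IsHomogeneousElem (fun i => (𝒜₁ i).prod (𝒜₂ i)) (0, b) :=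
  let ⟨i, hi⟩ := hb
  ⟨i, AddSubgroup.mem_prod.mpr ⟨zero_mem _, hi⟩⟩

variable {P₁ : Ideal R₁} {P₂ : Ideal R₂} {s₁ : R₁} {s₂ : R₂}

theorem mem_or_mem_of_isGradedSPrimeIdeal_prod [Zero ι] [GradedOne 𝒜₁] [GradedOne 𝒜₂]
    (h : IsGradedSPrimeIdeal (fun i => (𝒜₁ i).prod (𝒜₂ i)) (s₁, s₂) (P₁.prod P₂)) :
    s₁ ∈ P₁ ∨ s₂ ∈ P₂ := by
  have hone₁ : IsHomogeneousElem 𝒜₁ (1 : R₁) := ⟨0, one_mem_graded 𝒜₁⟩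
  have hone₂ : IsHomogeneousElem 𝒜₂ (1 : R₂) := ⟨0, one_mem_graded 𝒜₂⟩
  have hzero : ((1, 0) : R₁ × R₂) * (0, 1) ∈ P₁.prod P₂ := by simp
  rcases h.2 _ _ hone₁.inl hone₂.inr hzero with hsa | hsb
  · exact .inl (by simpa using ((Ideal.mem_prod _ _).mp hsa).1)
  · exact .inr (by simpa using ((Ideal.mem_prod _ _).mp hsb).2)

theorem IsGradedSPrimeIdeal.of_prod_left
    (h : IsGradedSPrimeIdeal (fun i => (𝒜₁ i).prod (𝒜₂ i)) (s₁, s₂) (P₁.prod P₂))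
    (hs₂ : s₂ ∈ P₂) : IsGradedSPrimeIdeal 𝒜₁ s₁ P₁ := by
  refine ⟨fun hs₁ => h.1 ((Ideal.mem_prod _ _).mpr ⟨hs₁, hs₂⟩), fun a b ha hb hab => ?_⟩
  have habP : ((a, 0) : R₁ × R₂) * (b, 0) ∈ P₁.prod P₂ := by simpa using hab
  rcases h.2 _ _ ha.inl hb.inl habP with hsa | hsb
  · exact .inl ((Ideal.mem_prod _ _).mp hsa).1
  · exact .inr ((Ideal.mem_prod _ _).mp hsb).1

theorem IsGradedSPrimeIdeal.of_prod_right
    (h : IsGradedSPrimeIdeal (fun i => (𝒜₁ i).prod (𝒜₂ i)) (s₁, s₂) (P₁.prod P₂))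
    (hs₁ : s₁ ∈ P₁) : IsGradedSPrimeIdeal 𝒜₂ s₂ P₂ := by
  refine ⟨fun hs₂ => h.1 ((Ideal.mem_prod _ _).mpr ⟨hs₁, hs₂⟩), fun a b ha hb hab => ?_⟩
  have habP : ((0, a) : R₁ × R₂) * (0, b) ∈ P₁.prod P₂ := by simpa using hab
  rcases h.2 _ _ ha.inr hb.inr habP with hsa | hsb
  · exact .inl ((Ideal.mem_prod _ _).mp hsa).2
  · exact .inr ((Ideal.mem_prod _ _).mp hsb).2

theorem IsGradedSPrimeIdeal.prod_left (h : IsGradedSPrimeIdeal 𝒜₁ s₁ P₁) (hs₂ : s₂ ∈ P₂) :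
    IsGradedSPrimeIdeal (fun i => (𝒜₁ i).prod (𝒜₂ i)) (s₁, s₂) (P₁.prod P₂) := by
  refine ⟨fun hs => h.1 ((Ideal.mem_prod _ _).mp hs).1, fun x y hx hy hxy => ?_⟩
  rcases h.2 _ _ hx.prod_fst hy.prod_fst ((Ideal.mem_prod _ _).mp hxy).1 with hsa | hsb
  · exact .inl ((Ideal.mem_prod _ _).mpr ⟨hsa, P₂.mul_mem_right _ hs₂⟩)
  · exact .inr ((Ideal.mem_prod _ _).mpr ⟨hsb, P₂.mul_mem_right _ hs₂⟩)

theorem IsGradedSPrimeIdeal.prod_right (h : IsGradedSPrimeIdeal 𝒜₂ s₂ P₂) (hs₁ : s₁ ∈ P₁) :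
    IsGradedSPrimeIdeal (fun i => (𝒜₁ i).prod (𝒜₂ i)) (s₁, s₂) (P₁.prod P₂) := by
  refine ⟨fun hs => h.1 ((Ideal.mem_prod _ _).mp hs).2, fun x y hx hy hxy => ?_⟩
  rcases h.2 _ _ hx.prod_snd hy.prod_snd ((Ideal.mem_prod _ _).mp hxy).2 with hsa | hsb
  · exact .inl ((Ideal.mem_prod _ _).mpr ⟨P₁.mul_mem_right _ hs₁, hsa⟩)
  · exact .inr ((Ideal.mem_prod _ _).mpr ⟨P₁.mul_mem_right _ hs₁, hsb⟩)

end Prod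

theorem stmt_13_general {R₁ R₂ : Type*} [AddGroup G] [DecidableEq G] [CommRing R₁] [CommRing R₂]
    (𝒜₁ : G → AddSubgroup R₁) (𝒜₂ : G → AddSubgroup R₂)
    [GradedRing 𝒜₁] [GradedRing 𝒜₂]
    (P₁ : Ideal R₁) (P₂ : Ideal R₂)
    (s₁ : R₁) (s₂ : R₂) :
    IsGradedSPrimeIdeal (fun g : G => (𝒜₁ g).prod (𝒜₂ g)) (s₁, s₂) (P₁.prod P₂) ↔
      (IsGradedSPrimeIdeal 𝒜₁ s₁ P₁ ∧ s₂ ∈ P₂) ∨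
      (IsGradedSPrimeIdeal 𝒜₂ s₂ P₂ ∧ s₁ ∈ P₁) := by
  refine ⟨fun h => ?_, ?_⟩
  · rcases mem_or_mem_of_isGradedSPrimeIdeal_prod h with hs₁ | hs₂
    · exact .inr ⟨h.of_prod_right hs₁, hs₁⟩
    · exact .inl ⟨h.of_prod_left hs₂, hs₂⟩
  · rintro (⟨h, hs₂⟩ | ⟨h, hs₁⟩)
    · exact h.prod_left hs₂
    · exact h.prod_right hs₁

/-- `P₁ × P₂` is graded `(s₁,s₂)`-prime in `R₁ × R₂` iff (`P₁` is graded
`s₁`-prime and `s₂ ∈ P₂`) or (`P₂` is graded `s₂`-prime and `s₁ ∈ P₁`). -/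
theorem stmt_13 {R₁ R₂ : Type*} [AddGroup G] [DecidableEq G] [CommRing R₁] [CommRing R₂]
    (𝒜₁ : G → AddSubgroup R₁) (𝒜₂ : G → AddSubgroup R₂)
    [GradedRing 𝒜₁] [GradedRing 𝒜₂]
    (P₁ : Ideal R₁) (P₂ : Ideal R₂)
    (hP₁ : IsGradedIdeal 𝒜₁ P₁) (hP₂ : IsGradedIdeal 𝒜₂ P₂)
    (s₁ : R₁) (s₂ : R₂) (hs0 : (s₁, s₂) ≠ (0, 0))
    (hsh : SetLike.IsHomogeneousElem (fun g : G => (𝒜₁ g).prod (𝒜₂ g)) (s₁, s₂)) :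
    IsGradedSPrimeIdeal (fun g : G => (𝒜₁ g).prod (𝒜₂ g)) (s₁, s₂) (P₁.prod P₂) ↔
      (IsGradedSPrimeIdeal 𝒜₁ s₁ P₁ ∧ s₂ ∈ P₂) ∨
      (IsGradedSPrimeIdeal 𝒜₂ s₂ P₂ ∧ s₁ ∈ P₁) :=
  stmt_13_general 𝒜₁ 𝒜₂ P₁ P₂ s₁ s₂
end

section
/- Let G be an abelian group, M a G-graded R-module, s a nonzero homogeneous element of R, and P a graded ideal of R with s ∉ P. Then P is a graded s-prime ideal of R if and only if P(+)M is a graded (s,0)-prime ideal of the idealization R(+)M. -/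
/-! `P(+)M` is the preimage of `P` under the ring map `fst : R(+)M → R`. This map sends homogeneous
elements to homogeneous ones, every homogeneous `r` lifts to the homogeneous `(r, 0)`, and `(s, 0)`
lies over `s`; graded `s`-primality transfers along any such map. -/

open DirectSum

variable {G R M : Type*}

section Idealization

variable [CommRing R] [AddCommGroup M] [Module R M] [Module Rᵐᵒᵖ M] [IsCentralScalar R M]

/-- The grading `(R(+)M)_g = R_g (+) M_g` of the idealization. -/
def tseGrade (𝒜 : G → AddSubgroup R) (ℳ : G → AddSubgroup M) (g : G) :
    AddSubgroup (TrivSqZeroExt R M) where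
  carrier := {a | a.fst ∈ 𝒜 g ∧ a.snd ∈ ℳ g}
  add_mem' := fun h h' => ⟨(𝒜 g).add_mem h.1 h'.1, (ℳ g).add_mem h.2 h'.2⟩
  zero_mem' := ⟨(𝒜 g).zero_mem, (ℳ g).zero_mem⟩
  neg_mem' := fun h => ⟨(𝒜 g).neg_mem h.1, (ℳ g).neg_mem h.2⟩

/-- The ideal `P(+)M` of the idealization `R(+)M`. -/
def idealize (P : Ideal R) : Ideal (TrivSqZeroExt R M) where
  carrier := {a | a.fst ∈ P}
  add_mem' := fun h h' => P.add_mem h h'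
  zero_mem' := P.zero_mem
  smul_mem' := fun c a ha => by
    show (c * a).fst ∈ P
    rw [TrivSqZeroExt.fst_mul]
    exact P.mul_mem_left c.fst ha

end Idealization

theorem isGradedSPrimeIdeal_comap_iff {ι ι' A B F : Type*} [CommRing A] [CommRing B]
    [FunLike F A B] [RingHomClass F A B]
    {𝒜 : ι → AddSubgroup A} {ℬ : ι' → AddSubgroup B} (f : F)
    (hf : ∀ a, SetLike.IsHomogeneousElem 𝒜 a → SetLike.IsHomogeneousElem ℬ (f a))
    (hf_surj : ∀ b, SetLike.IsHomogeneousElem ℬ b → ∃ a, SetLike.IsHomogeneousElem 𝒜 a ∧ f a = b)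
    {s : A} {P : Ideal B} :
    IsGradedSPrimeIdeal ℬ (f s) P ↔ IsGradedSPrimeIdeal 𝒜 s (P.comap f) := by
  simp only [IsGradedSPrimeIdeal, Ideal.mem_comap, map_mul]
  refine and_congr_right fun _ => ⟨fun h a b ha hb hab => h _ _ (hf a ha) (hf b hb) hab, ?_⟩
  intro h b₁ b₂ hb₁ hb₂ hb
  obtain ⟨a₁, ha₁, rfl⟩ := hf_surj b₁ hb₁
  obtain ⟨a₂, ha₂, rfl⟩ := hf_surj b₂ hb₂
  exact h a₁ a₂ ha₁ ha₂ hb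

theorem isHomogeneousElem_fst_of_tseGrade [CommRing R] [AddCommGroup M]
    {𝒜 : G → AddSubgroup R} {ℳ : G → AddSubgroup M} {a : TrivSqZeroExt R M}
    (ha : SetLike.IsHomogeneousElem (tseGrade 𝒜 ℳ) a) : SetLike.IsHomogeneousElem 𝒜 a.fst :=
  let ⟨g, hg⟩ := ha
  ⟨g, hg.1⟩

theorem isHomogeneousElem_inl_tseGrade [CommRing R] [AddCommGroup M]
    {𝒜 : G → AddSubgroup R} (ℳ : G → AddSubgroup M) {r : R}
    (hr : SetLike.IsHomogeneousElem 𝒜 r) :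
    SetLike.IsHomogeneousElem (tseGrade 𝒜 ℳ) (TrivSqZeroExt.inl r : TrivSqZeroExt R M) :=
  let ⟨g, hg⟩ := hr
  ⟨g, hg, (ℳ g).zero_mem⟩

section Idealization

variable [CommRing R] [AddCommGroup M] [Module R M] [Module Rᵐᵒᵖ M] [IsCentralScalar R M]

theorem idealize_eq_comap_fstHom (P : Ideal R) :
    idealize (M := M) P = P.comap (TrivSqZeroExt.fstHom R R M) :=
  Ideal.ext fun _ => Iff.rfl

theorem stmt_15_general
    (𝒜 : G → AddSubgroup R) (ℳ : G → AddSubgroup M)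
    (s : R) (P : Ideal R) :
    IsGradedSPrimeIdeal 𝒜 s P ↔
      IsGradedSPrimeIdeal (tseGrade 𝒜 ℳ) (TrivSqZeroExt.inl s) (idealize P) := by
  rw [idealize_eq_comap_fstHom]
  exact isGradedSPrimeIdeal_comap_iff (TrivSqZeroExt.fstHom R R M) (s := TrivSqZeroExt.inl s)
    (fun _ => isHomogeneousElem_fst_of_tseGrade)
    (fun r hr => ⟨_, isHomogeneousElem_inl_tseGrade ℳ hr, TrivSqZeroExt.fst_inl M r⟩)

/-- for `G` abelian, a graded ideal `P` with `s ∉ P` is graded `s`-prime iff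
`P(+)M` is a graded `(s,0)`-prime ideal of the idealization `R(+)M`. -/
theorem stmt_15 [AddCommGroup G] [DecidableEq G]
    (𝒜 : G → AddSubgroup R) (ℳ : G → AddSubgroup M)
    [GradedRing 𝒜] [DirectSum.Decomposition ℳ] [SetLike.GradedSMul 𝒜 ℳ]
    (s : R) (hs0 : s ≠ 0) (hsh : SetLike.IsHomogeneousElem 𝒜 s)
    (P : Ideal R) (hP : IsGradedIdeal 𝒜 P) (hsP : s ∉ P) :
    IsGradedSPrimeIdeal 𝒜 s P ↔
      IsGradedSPrimeIdeal (tseGrade 𝒜 ℳ) (TrivSqZeroExt.inl s) (idealize P) :=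
  stmt_15_general 𝒜 ℳ s P

end Idealization
end

section
/- Let M be a graded R-module and N a graded submodule. Consider the family D_N = {(N :_M t) : t nonzero homogeneous in R with t ∉ (N :_R M)}. If (N :_M s) is a maximal element of D_N with respect to inclusion, then (N :_M s) is a graded prime submodule of M, and consequently N is a graded s-prime submodule of M. -/
open DirectSum

variable {G R M : Type*}

/-! The maximal element `(N :_M s)` of `D_N` is prime because, whenever `s * r ∉ (N :_R M)`, the
element `(N :_M s * r)` of `D_N` contains `(N :_M s)` and hence equals it; so `r • m ∈ (N :_M s)`
gives `m ∈ (N :_M s * r) = (N :_M s)`. -/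

namespace Submodule

variable {R M : Type*} [CommRing R] [AddCommGroup M] [Module R M] (N : Submodule R M)

@[simp]
theorem mem_comap_lsmul {s : R} {m : M} : m ∈ N.comap (LinearMap.lsmul R M s) ↔ s • m ∈ N :=
  Iff.rfl

theorem mem_colon_comap_lsmul {s r : R} :
    r ∈ (N.comap (LinearMap.lsmul R M s)).colon ⊤ ↔ s * r ∈ N.colon ⊤ := by
  simp only [mem_colon, mem_comap_lsmul, mul_smul]

theorem comap_lsmul_ne_top {s : R} (hs : s ∉ N.colon ⊤) : N.comap (LinearMap.lsmul R M s) ≠ ⊤ := by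
  intro h
  exact hs (mem_colon.mpr fun m _ => (N.mem_comap_lsmul).mp (h ▸ mem_top))

theorem comap_lsmul_le_comap_lsmul_mul (s r : R) :
    N.comap (LinearMap.lsmul R M s) ≤ N.comap (LinearMap.lsmul R M (s * r)) := fun m hm => by
  rw [mem_comap_lsmul] at hm ⊢
  rw [mul_comm, mul_smul]
  exact N.smul_mem r hm

variable {G : Type*} (𝒜 : G → AddSubgroup R) (ℳ : G → AddSubgroup M)

theorem isGradedSPrime_of_isGradedPrime_comap_lsmul {s : R} (hsN : s ∉ N.colon ⊤)
    (hprime : IsGradedPrime 𝒜 ℳ (N.comap (LinearMap.lsmul R M s))) : IsGradedSPrime 𝒜 ℳ s N := by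
  refine ⟨hsN, fun r m hr hm hrm => ?_⟩
  rw [← mem_colon_comap_lsmul, ← mem_comap_lsmul]
  exact hprime.2 r m hr hm (N.smul_mem s hrm)

theorem isGradedPrime_comap_lsmul_of_maximal [AddMonoid G] [DecidableEq G] [GradedRing 𝒜]
    {s : R} (hsh : SetLike.IsHomogeneousElem 𝒜 s) (hsN : s ∉ N.colon ⊤)
    (hmax : ∀ t : R, t ≠ 0 → SetLike.IsHomogeneousElem 𝒜 t → t ∉ N.colon ⊤ →
      N.comap (LinearMap.lsmul R M s) ≤ N.comap (LinearMap.lsmul R M t) →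
      N.comap (LinearMap.lsmul R M s) = N.comap (LinearMap.lsmul R M t)) :
    IsGradedPrime 𝒜 ℳ (N.comap (LinearMap.lsmul R M s)) := by
  refine ⟨N.comap_lsmul_ne_top hsN, fun r m hr _ hrm => ?_⟩
  rw [mem_colon_comap_lsmul]
  refine or_iff_not_imp_left.mpr fun hsr => ?_
  have hsr0 : s * r ≠ 0 := fun h => hsr (h ▸ (N.colon ⊤).zero_mem)
  rw [hmax (s * r) hsr0 (hsh.mul hr) hsr (N.comap_lsmul_le_comap_lsmul_mul s r),
    mem_comap_lsmul, mul_smul]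
  exact (N.mem_comap_lsmul).mp hrm

end Submodule

theorem stmt_18_general [AddGroup G] [DecidableEq G] [CommRing R] [AddCommGroup M] [Module R M]
    (𝒜 : G → AddSubgroup R) (ℳ : G → AddSubgroup M)
    [GradedRing 𝒜]
    (N : Submodule R M)
    (s : R) (hsh : SetLike.IsHomogeneousElem 𝒜 s) (hsN : s ∉ N.colon ⊤)
    (hmax : ∀ t : R, t ≠ 0 → SetLike.IsHomogeneousElem 𝒜 t → t ∉ N.colon ⊤ →
      N.comap (LinearMap.lsmul R M s) ≤ N.comap (LinearMap.lsmul R M t) →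
      N.comap (LinearMap.lsmul R M s) = N.comap (LinearMap.lsmul R M t)) :
    IsGradedPrime 𝒜 ℳ (N.comap (LinearMap.lsmul R M s)) ∧ IsGradedSPrime 𝒜 ℳ s N := by
  have hprime := N.isGradedPrime_comap_lsmul_of_maximal 𝒜 ℳ hsh hsN hmax
  exact ⟨hprime, N.isGradedSPrime_of_isGradedPrime_comap_lsmul 𝒜 ℳ hsN hprime⟩

/-- if `(N :_M s)` is maximal (w.r.t. inclusion) in the family
`D_N = {(N :_M t) : t` nonzero homogeneous, `t ∉ (N :_R M)}`, then `(N :_M s)` is a graded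
prime submodule of `M`, and consequently `N` is graded `s`-prime. -/
theorem stmt_18 [AddGroup G] [DecidableEq G] [CommRing R] [AddCommGroup M] [Module R M]
    (𝒜 : G → AddSubgroup R) (ℳ : G → AddSubgroup M)
    [GradedRing 𝒜] [DirectSum.Decomposition ℳ] [SetLike.GradedSMul 𝒜 ℳ]
    (N : Submodule R M) (hN : IsGradedSubmodule ℳ N) (hNtop : N ≠ ⊤)
    (s : R) (hs0 : s ≠ 0) (hsh : SetLike.IsHomogeneousElem 𝒜 s) (hsN : s ∉ N.colon ⊤)
    (hmax : ∀ t : R, t ≠ 0 → SetLike.IsHomogeneousElem 𝒜 t → t ∉ N.colon ⊤ →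
      N.comap (LinearMap.lsmul R M s) ≤ N.comap (LinearMap.lsmul R M t) →
      N.comap (LinearMap.lsmul R M s) = N.comap (LinearMap.lsmul R M t)) :
    IsGradedPrime 𝒜 ℳ (N.comap (LinearMap.lsmul R M s)) ∧ IsGradedSPrime 𝒜 ℳ s N :=
  stmt_18_general 𝒜 ℳ N s hsh hsN hmax
end

section
/- Let (R,G) be a crossed product grading (every homogeneous component of the support contains a unit) and I = ⊕_{g∈G} I_g a graded ideal of R. Then I is a graded s-prime ideal for some nonzero homogeneous s if and only if I_e = I ∩ R_e is an s'-prime ideal of R_e for some t ∈ R_e, in the sense that t ∉ I_e and for a, b ∈ R_e, ab ∈ I_e implies ta ∈ I_e or tb ∈ I_e. -/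
open DirectSum

variable {G R M : Type*}

/-!
In a crossed product grading every nonzero homogeneous element `a` of degree `g` is associated
to an element of degree `0`: multiply it by the inverse of a unit of degree `g`, which has
degree `-g`. Membership in an ideal is invariant under associates, so `s` and the elements
tested by the `s`-prime condition can all be moved to degree `0` and back.
-/

namespace GradedRing

variable {σ : Type*} [AddGroup G] [DecidableEq G]

def IsCrossedProduct [Semiring R] [SetLike σ R] (𝒜 : G → σ) : Prop :=
  ∀ g : G, (∃ x ∈ 𝒜 g, x ≠ 0) → ∃ u ∈ 𝒜 g, IsUnit u

variable [Semiring R] [SetLike σ R] [AddSubmonoidClass σ R] (𝒜 : G → σ) [GradedRing 𝒜]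

theorem coe_inv_mem_neg {u : Rˣ} {g : G} (hu : (u : R) ∈ 𝒜 g) : (↑u⁻¹ : R) ∈ 𝒜 (-g) := by
  set w : R := (decompose 𝒜 (↑u⁻¹ : R) (-g) : R)
  -- the degree `-g` part of `u⁻¹` is already a right inverse of `u`
  have huw : (u : R) * w = 1 := by
    rw [← coe_decompose_mul_add_of_left_mem 𝒜 hu, add_neg_cancel, Units.mul_inv,
      decompose_of_mem_same 𝒜 (SetLike.one_mem_graded 𝒜)]
  rw [Units.inv_eq_of_mul_eq_one_right huw]
  exact SetLike.coe_mem _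

variable {𝒜}

theorem exists_mem_zero_associated_of_mem {a u : R} {g : G} (hu : u ∈ 𝒜 g) (hunit : IsUnit u)
    (ha : a ∈ 𝒜 g) : ∃ a₀ ∈ 𝒜 0, Associated a a₀ := by
  obtain ⟨u, rfl⟩ := hunit
  refine ⟨a * ↑u⁻¹, ?_, ⟨u⁻¹, rfl⟩⟩
  simpa using SetLike.mul_mem_graded ha (coe_inv_mem_neg 𝒜 hu)

theorem IsCrossedProduct.exists_mem_zero_associated (h𝒜 : IsCrossedProduct 𝒜) {a : R}
    (ha : SetLike.IsHomogeneousElem 𝒜 a) : ∃ a₀ ∈ 𝒜 0, Associated a a₀ := by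
  obtain ⟨g, hag⟩ := ha
  by_cases ha0 : a = 0
  · exact ⟨0, zero_mem _, by rw [ha0]⟩
  obtain ⟨u, hug, hunit⟩ := h𝒜 g ⟨a, hag, ha0⟩
  exact exists_mem_zero_associated_of_mem hug hunit hag

end GradedRing

theorem stmt_19_general [AddGroup G] [DecidableEq G] [CommRing R]
    (𝒜 : G → AddSubgroup R) [GradedRing 𝒜]
    (hcross : ∀ g : G, (∃ x ∈ 𝒜 g, x ≠ 0) → ∃ u ∈ 𝒜 g, IsUnit u)
    (I : Ideal R) :
    (∃ s : R, s ≠ 0 ∧ SetLike.IsHomogeneousElem 𝒜 s ∧ IsGradedSPrimeIdeal 𝒜 s I) ↔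
    (∃ t : R, t ∈ 𝒜 0 ∧ t ∉ I ∧
      ∀ a b : R, a ∈ 𝒜 0 → b ∈ 𝒜 0 → a * b ∈ I → t * a ∈ I ∨ t * b ∈ I) := by
  have h𝒜 : GradedRing.IsCrossedProduct 𝒜 := hcross
  constructor
  · rintro ⟨s, -, hs, hsI, hprime⟩
    obtain ⟨s₀, hs₀, hss₀⟩ := h𝒜.exists_mem_zero_associated hs
    refine ⟨s₀, hs₀, (I.mem_iff_of_associated hss₀).not.mp hsI, fun a b ha hb hab => ?_⟩
    rw [← I.mem_iff_of_associated (hss₀.mul_right a),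
      ← I.mem_iff_of_associated (hss₀.mul_right b)]
    exact hprime a b ⟨0, ha⟩ ⟨0, hb⟩ hab
  · rintro ⟨t, ht, htI, hprime⟩
    refine ⟨t, by rintro rfl; exact htI I.zero_mem, ⟨0, ht⟩, htI, fun a b ha hb hab => ?_⟩
    obtain ⟨a₀, ha₀, haa₀⟩ := h𝒜.exists_mem_zero_associated ha
    obtain ⟨b₀, hb₀, hbb₀⟩ := h𝒜.exists_mem_zero_associated hb
    rw [I.mem_iff_of_associated (haa₀.mul_left t), I.mem_iff_of_associated (hbb₀.mul_left t)]
    exact hprime a₀ b₀ ha₀ hb₀ ((I.mem_iff_of_associated (haa₀.mul_mul hbb₀)).mp hab)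

/-- for a crossed product grading, a graded ideal `I` is graded `s`-prime for
some nonzero homogeneous `s` iff `I_e = I ∩ R_e` is a `t`-prime ideal of `R_e` for some
`t ∈ R_e`, i.e. `t ∉ I_e` and for `a, b ∈ R_e`, `ab ∈ I_e` implies `ta ∈ I_e` or
`tb ∈ I_e`. -/
theorem stmt_19 [AddGroup G] [DecidableEq G] [CommRing R]
    (𝒜 : G → AddSubgroup R) [GradedRing 𝒜]
    (hcross : ∀ g : G, (∃ x ∈ 𝒜 g, x ≠ 0) → ∃ u ∈ 𝒜 g, IsUnit u)
    (I : Ideal R) (hI : IsGradedIdeal 𝒜 I) :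
    (∃ s : R, s ≠ 0 ∧ SetLike.IsHomogeneousElem 𝒜 s ∧ IsGradedSPrimeIdeal 𝒜 s I) ↔
    (∃ t : R, t ∈ 𝒜 0 ∧ t ∉ I ∧
      ∀ a b : R, a ∈ 𝒜 0 → b ∈ 𝒜 0 → a * b ∈ I → t * a ∈ I ∨ t * b ∈ I) :=
  stmt_19_general 𝒜 hcross I
end
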